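/- arXiv:2209.10638 — 9 statements merged into one kernel-verified Lean document; each statement's English description precedes it below -/
import Mathlib

section
/- Let p be an odd prime, (a_1,…,a_{p−1}) a strongly carefree tuple with m = ∏_{i=1}^{p−1} a_i^i > 1, K = ℚ(α) with α the real p-th root of m, and γ_j = α^j / ∏_{i=1}^{p−1} a_i^{⌊ij/p⌋} for 1 ≤ j ≤ p−1, with γ_0 = 1. Then for all 0 ≤ i, j ≤ p−1, the sum over all p field embeddings σ : K → ℂ of σ(γ_i)·conj(σ(γ_j)) equals p·γ_i² when i = j, and equals 0 when i ≠ j. In particular, the Gram matrix of the basis {1, γ_1, …, γ_{p−1}} under the Minkowski embedding is the diagonal matrix diag(p, pγ_1², pγ_2², …, pγ_{p−1}²). -/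
/-!
Since the tuple is strongly carefree, any prime `q ∣ m` divides exactly one `a i₀`, and it divides
`m` exactly `i₀` times with `1 ≤ i₀ ≤ p - 1`; so `m` is not a `p`-th power in `ℚ` and `X ^ p - m`
is irreducible. The embeddings of `K = ℚ(α)` therefore send `α` to the roots `ζ ^ k * α`
(`ζ` a primitive `p`-th root of unity), and `σ (γ j) = ζ ^ (k * j) * γ j`. As `conj ζ = ζ⁻¹`,
the inner product of `γ i` and `γ j` is `γ i * γ j * ∑ k < p, ζ ^ (k * (i - j))`, which is
`p * γ i ^ 2` for `i = j` and vanishes otherwise.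
-/

open Finset

/-- A tuple `(a 1, …, a (p-1))` of positive integers is *strongly carefree* if each `a i`
is squarefree and the `a i` are pairwise coprime. -/
def StronglyCarefree (p : ℕ) (a : ℕ → ℕ) : Prop :=
  (∀ i ∈ Finset.Icc 1 (p - 1), 0 < a i ∧ Squarefree (a i)) ∧
  (∀ i ∈ Finset.Icc 1 (p - 1), ∀ j ∈ Finset.Icc 1 (p - 1), i ≠ j → Nat.Coprime (a i) (a j))

open Polynomial IntermediateField ComplexConjugate

theorem Rat.pow_ne_natCast_of_not_dvd_factorization {n m q : ℕ}
    (h : ¬ n ∣ m.factorization q) (b : ℚ) : b ^ n ≠ m := by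
  intro hb
  have hnum : b.num ^ n = m := by simpa [Rat.num_pow] using congrArg Rat.num hb
  have hm : b.num.natAbs ^ n = m := by simpa [Int.natAbs_pow] using congrArg Int.natAbs hnum
  exact h (hm ▸ by simp [Nat.factorization_pow])

theorem StronglyCarefree.factorization_prod_pow_eq {p : ℕ} {a : ℕ → ℕ}
    (ha : StronglyCarefree p a) {q i₀ : ℕ} (hq : q.Prime) (hi₀ : i₀ ∈ Icc 1 (p - 1))
    (hqa : q ∣ a i₀) : (∏ i ∈ Icc 1 (p - 1), a i ^ i).factorization q = i₀ := by
  have ha0 : ∀ i ∈ Icc 1 (p - 1), a i ≠ 0 := fun i hi => (ha.1 i hi).1.ne'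
  rw [Nat.factorization_prod fun i hi => pow_ne_zero _ (ha0 i hi), Finsupp.finsetSum_apply,
    sum_eq_single_of_mem i₀ hi₀]
  · have hle := (ha.1 i₀ hi₀).2.natFactorization_le_one q
    have hpos := hq.factorization_pos_of_dvd (ha0 i₀ hi₀) hqa
    simp [Nat.factorization_pow, le_antisymm hle hpos]
  · intro i hi hne
    have hqi : ¬ q ∣ a i := fun hqi =>
      hq.one_lt.ne' (Nat.eq_one_of_dvd_one (ha.2 i hi i₀ hi₀ hne ▸ Nat.dvd_gcd hqi hqa))
    simp [Nat.factorization_pow, Nat.factorization_eq_zero_of_not_dvd hqi]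

theorem StronglyCarefree.rat_pow_ne_prod_pow {p : ℕ} {a : ℕ → ℕ}
    (ha : StronglyCarefree p a) (hm : 1 < ∏ i ∈ Icc 1 (p - 1), a i ^ i) (b : ℚ) :
    b ^ p ≠ ((∏ i ∈ Icc 1 (p - 1), a i ^ i : ℕ) : ℚ) := by
  set m := ∏ i ∈ Icc 1 (p - 1), a i ^ i
  have hq := Nat.minFac_prime hm.ne'
  obtain ⟨i₀, hi₀, hqi₀⟩ := hq.prime.exists_mem_finset_dvd (Nat.minFac_dvd m)
  refine Rat.pow_ne_natCast_of_not_dvd_factorization (q := m.minFac) ?_ b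
  rw [ha.factorization_prod_pow_eq hq hi₀ (hq.dvd_of_dvd_pow hqi₀)]
  have := mem_Icc.mp hi₀
  exact Nat.not_dvd_of_pos_of_lt (by omega) (by omega)

theorem IsPrimitiveRoot.sum_pow_pow_mul_inv_pow_pow {K : Type*} [Field K] {ζ : K} {n i j : ℕ}
    (hζ : IsPrimitiveRoot ζ n) (hi : i < n) (hj : j < n) :
    ∑ k ∈ range n, (ζ ^ k) ^ i * ((ζ ^ k) ^ j)⁻¹ = if i = j then (n : K) else 0 := by
  have hζ0 : ζ ≠ 0 := hζ.ne_zero (by omega)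
  have hterm : ∀ k, (ζ ^ k) ^ i * ((ζ ^ k) ^ j)⁻¹ = (ζ ^ i * (ζ ^ j)⁻¹) ^ k := fun k => by
    rw [mul_pow, inv_pow, ← pow_mul, ← pow_mul, ← pow_mul, ← pow_mul, mul_comm i, mul_comm j]
  simp_rw [hterm]
  split_ifs with hij
  · simp [hij, pow_ne_zero _ hζ0]
  · have hne : ζ ^ i * (ζ ^ j)⁻¹ ≠ 1 := fun h =>
      hij (hζ.pow_inj hi hj ((mul_inv_eq_one₀ (pow_ne_zero _ hζ0)).mp h))
    have hpow : (ζ ^ i * (ζ ^ j)⁻¹) ^ n = 1 := by simp [← hterm, hζ.pow_eq_one]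
    rw [geom_sum_eq hne, hpow, sub_self, zero_div]

theorem minpoly_eq_X_pow_sub_C_of_irreducible {F E : Type*} [Field F] [Field E] [Algebra F E]
    {n : ℕ} [NeZero n] {r : F} {x : E} (hirr : Irreducible (X ^ n - C r))
    (hx : x ^ n = algebraMap F E r) : minpoly F x = X ^ n - C r :=
  (minpoly.eq_of_irreducible_of_monic hirr (by simp [hx]) (monic_X_pow_sub_C r (NeZero.ne n))).symm

theorem sum_ringHom_adjoin_gen_eq_sum_range {E M : Type*} [Field E] [CharZero E]
    [AddCommMonoid M] {n : ℕ} [NeZero n] {r : ℚ} {x : E} (hirr : Irreducible (X ^ n - C r))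
    (hx : x ^ n = r) {ζ β : ℂ} (hζ : IsPrimitiveRoot ζ n) (hβ : β ^ n = r)
    [Fintype (ℚ⟮x⟯ →+* ℂ)] (f : ℂ → M) :
    ∑ σ : ℚ⟮x⟯ →+* ℂ, f (σ (AdjoinSimple.gen ℚ x)) = ∑ k ∈ range n, f (ζ ^ k * β) := by
  classical
  have hint : IsIntegral ℚ x := .of_pow (NeZero.pos n) (hx ▸ isIntegral_algebraMap (x := r))
  let pb := adjoin.powerBasis hint
  have hroots : (minpoly ℚ pb.gen).aroots ℂ = (range n).val.map (ζ ^ · * β) := by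
    rw [adjoin.powerBasis_gen]
    -- `erw`: `pb` carries the algebra structure `ℚ⟮x⟯.algebra'`, not `DivisionRing.toRatAlgebra`
    erw [minpoly_gen]
    rw [minpoly_eq_X_pow_sub_C_of_irreducible hirr hx, aroots, Polynomial.map_sub, Polynomial.map_pow, map_X, map_C, ← nthRoots,
      hζ.nthRoots_eq (by simpa using hβ), range_val]
  have hnodup : ((minpoly ℚ pb.gen).aroots ℂ).Nodup :=
    nodup_roots ((separable_map _).mpr (minpoly.irreducible pb.isIntegral_gen).separable)
  let e : (ℚ⟮x⟯ →+* ℂ) ≃ { y // y ∈ (minpoly ℚ pb.gen).aroots ℂ } :=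
    (RingHom.equivRatAlgHom _ _).trans pb.liftEquiv'
  rw [Fintype.sum_equiv e (fun σ => f (σ (AdjoinSimple.gen ℚ x))) (fun y => f y) fun σ => rfl,
    sum_mem_multiset _ _ f fun _ => rfl, sum_eq_multiset_sum,
    Multiset.toFinset_val, Multiset.dedup_eq_self.mpr hnodup, hroots, Multiset.map_map]
  rfl

theorem sum_ringHom_adjoin_gen_pow_mul_conj_pow {n : ℕ} [NeZero n] {r : ℚ} {α : ℝ}
    (hirr : Irreducible (X ^ n - C r)) (hα : α ^ n = r) [Fintype (ℚ⟮α⟯ →+* ℂ)] {i j : ℕ}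
    (hi : i < n) (hj : j < n) :
    ∑ σ : ℚ⟮α⟯ →+* ℂ, σ (AdjoinSimple.gen ℚ α) ^ i * conj (σ (AdjoinSimple.gen ℚ α) ^ j) =
      if i = j then n * (α : ℂ) ^ (2 * i) else 0 := by
  obtain ⟨ζ, hζ⟩ : ∃ ζ : ℂ, IsPrimitiveRoot ζ n :=
    ⟨_, Complex.isPrimitiveRoot_exp n (NeZero.ne n)⟩
  have hconj : conj ζ = ζ⁻¹ :=
    (Complex.inv_eq_conj (Complex.norm_eq_one_of_pow_eq_one hζ.pow_eq_one (NeZero.ne n))).symm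
  rw [sum_ringHom_adjoin_gen_eq_sum_range hirr hα hζ (β := α) (by exact_mod_cast hα)
    fun y => y ^ i * conj (y ^ j)]
  have hterm : ∀ k, (ζ ^ k * α) ^ i * conj ((ζ ^ k * α) ^ j) =
      (α : ℂ) ^ (i + j) * ((ζ ^ k) ^ i * ((ζ ^ k) ^ j)⁻¹) := fun k => by
    simp only [map_pow, map_mul, hconj, Complex.conj_ofReal]
    ring
  rw [sum_congr rfl fun k _ => hterm k, ← mul_sum, hζ.sum_pow_pow_mul_inv_pow_pow hi hj]
  split_ifs with hij
  · rw [hij, two_mul]; ring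
  · simp

theorem gram_matrix_pure_prime_degree_wild_general
    (p : ℕ) (hp : p.Prime)
    (a : ℕ → ℕ) (ha : StronglyCarefree p a)
    (m : ℕ) (hm : m = ∏ i ∈ Finset.Icc 1 (p - 1), a i ^ i) (hm1 : 1 < m)
    (α : ℝ) (hαp : α ^ p = (m : ℝ))
    (γ : ℕ → ℝ)
    (hγ : ∀ j, γ j = α ^ j / ∏ i ∈ Finset.Icc 1 (p - 1), (a i : ℝ) ^ (i * j / p))
    (K : IntermediateField ℚ ℝ) [NumberField K]
    (hK : K = IntermediateField.adjoin ℚ {α})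
    (hγK : ∀ j, γ j ∈ K) :
    ∀ i j : Fin p,
      ∑ σ : K →+* ℂ,
          σ ⟨γ (i : ℕ), hγK i⟩ * (starRingEnd ℂ) (σ ⟨γ (j : ℕ), hγK j⟩) =
        if i = j then (p : ℂ) * ((γ (i : ℕ) : ℝ) : ℂ) ^ 2 else 0 := by
  subst hK hm
  have : NeZero p := ⟨hp.ne_zero⟩
  have hirr := X_pow_sub_C_irreducible_of_prime hp (ha.rat_pow_ne_prod_pow hm1)
  have hαr : α ^ p = ((∏ i ∈ Icc 1 (p - 1), a i ^ i : ℕ) : ℚ) := by exact_mod_cast hαp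
  set b : ℕ → ℕ := fun j => ∏ l ∈ Icc 1 (p - 1), a l ^ (l * j / p)
  have hσγ : ∀ (σ : ℚ⟮α⟯ →+* ℂ) (j : ℕ),
      σ ⟨γ j, hγK j⟩ = σ (AdjoinSimple.gen ℚ α) ^ j / b j := by
    intro σ j
    have : (⟨γ j, hγK j⟩ : ℚ⟮α⟯) = AdjoinSimple.gen ℚ α ^ j / b j := Subtype.ext (by simp [hγ, b])
    simp [this]
  intro i j
  simp_rw [hσγ, map_div₀, map_natCast, div_mul_div_comm, ← sum_div,
    sum_ringHom_adjoin_gen_pow_mul_conj_pow hirr hαr i.isLt j.isLt, Fin.val_inj]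
  split_ifs with hij
  · subst hij
    rw [hγ]
    push_cast [b]
    ring
  · exact zero_div _

/-- For the basis `{1 = γ 0, γ 1, …, γ (p−1)}` of a pure prime degree field `K = ℚ(α)`,
the Hermitian inner products over all `p` complex embeddings are
`∑_σ σ(γ i)·conj(σ(γ j)) = p·γ i ^ 2` if `i = j` and `0` otherwise; i.e. the Gram matrix
under the Minkowski embedding is `diag(p, p γ₁², …, p γ_{p−1}²)`. -/
theorem gram_matrix_pure_prime_degree_wild
    (p : ℕ) (hp : p.Prime) (hodd : Odd p)
    (a : ℕ → ℕ) (ha : StronglyCarefree p a)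
    (m : ℕ) (hm : m = ∏ i ∈ Finset.Icc 1 (p - 1), a i ^ i) (hm1 : 1 < m)
    (α : ℝ) (hαpos : 0 < α) (hαp : α ^ p = (m : ℝ))
    (γ : ℕ → ℝ)
    (hγ : ∀ j, γ j = α ^ j / ∏ i ∈ Finset.Icc 1 (p - 1), (a i : ℝ) ^ (i * j / p))
    (K : IntermediateField ℚ ℝ) [NumberField K]
    (hK : K = IntermediateField.adjoin ℚ {α})
    (hγK : ∀ j, γ j ∈ K) :
    ∀ i j : Fin p,
      ∑ σ : K →+* ℂ,
          σ ⟨γ (i : ℕ), hγK i⟩ * (starRingEnd ℂ) (σ ⟨γ (j : ℕ), hγK j⟩) =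
        if i = j then (p : ℂ) * ((γ (i : ℕ) : ℝ) : ℂ) ^ 2 else 0 :=
  gram_matrix_pure_prime_degree_wild_general p hp a ha m hm hm1 α hαp γ hγ K hK hγK
end

section
/- Let p be an odd prime, (a_1,…,a_{p−1}) a strongly carefree tuple with m = ∏_{i=1}^{p−1} a_i^i > 1, K = ℚ(α) with α the real p-th root of m, and suppose p² divides m^{p−1} − 1 with ε an integer satisfying εm ≡ 1 (mod p²). Set ν = (1/p)·(m + ∑_{i=1}^{p−1} ε^{i−1} α^i) and ν′ = (1/p)·(m² + ∑_{i=1}^{p−1} ε^{2(i−1)} α^{2i}). Then the element ν − m/p, which is the orthogonal projection of ν away from 1, satisfies: the sum over all p field embeddings σ : K → ℂ of |σ(ν − m/p)|² equals ν′ − m²/p. -/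
open Finset IntermediateField

lemma not_pth_power (p : ℕ) (hp : p.Prime) (a : ℕ → ℕ) (ha : StronglyCarefree p a)
    (m : ℕ) (hm : m = ∏ i ∈ Finset.Icc 1 (p - 1), a i ^ i) (hm1 : 1 < m) :
    ∀ b : ℚ, b ^ p ≠ (m : ℚ) := by
  intro b hb
  -- b is an integer
  have hden : b.den = 1 := by
    have h1 : b.den ^ p = 1 := by
      have := congrArg Rat.den hb
      simpa [Rat.den_pow] using this
    exact ((pow_eq_one_iff).mp h1).resolve_right hp.ne_zero
  obtain ⟨z, hz⟩ : ∃ z : ℤ, (z : ℚ) = b := ⟨b.num, (Rat.den_eq_one_iff b).mp hden⟩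
  have hzp : z ^ p = (m : ℤ) := by
    have : ((z ^ p : ℤ) : ℚ) = ((m : ℤ) : ℚ) := by push_cast [hz]; exact_mod_cast hb
    exact_mod_cast this
  -- so m = n ^ p for a natural number n
  have hnp : z.natAbs ^ p = m := by
    rw [← Int.natAbs_pow, hzp, Int.natAbs_natCast]
  set n := z.natAbs with hn
  -- now the factorization argument
  set I := Finset.Icc 1 (p - 1) with hI
  have hane : ∀ i ∈ I, a i ^ i ≠ 0 := fun i hi => pow_ne_zero _ (ha.1 i hi).1.ne'
  -- a prime divisor of m
  set q := m.minFac with hq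
  have hqp : q.Prime := Nat.minFac_prime (by omega)
  have hqm : q ∣ m := Nat.minFac_dvd m
  obtain ⟨i₀, hi₀I, hqi₀pow⟩ := Prime.exists_mem_finset_dvd hqp.prime (hm ▸ hqm)
  have hqi₀ : q ∣ a i₀ := hqp.prime.dvd_of_dvd_pow hqi₀pow
  have hfac : m.factorization q = i₀ := by
    rw [hm, Nat.factorization_prod hane]
    rw [Finset.sum_apply']
    rw [Finset.sum_eq_single_of_mem i₀ hi₀I]
    · rw [Nat.factorization_pow, Finsupp.smul_apply]
      have h1 : (a i₀).factorization q = 1 := by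
        have hle := (Nat.squarefree_iff_factorization_le_one (ha.1 i₀ hi₀I).1.ne').mp
          (ha.1 i₀ hi₀I).2 q
        have hpos := hqp.factorization_pos_of_dvd (ha.1 i₀ hi₀I).1.ne' hqi₀
        omega
      simp [h1]
    · intro i hiI hne
      rw [Nat.factorization_pow, Finsupp.smul_apply]
      have : ¬ q ∣ a i := fun hd =>
        hqp.one_lt.ne' (Nat.eq_one_of_dvd_coprimes (ha.2 i hiI i₀ hi₀I hne) hd hqi₀)
      simp [Nat.factorization_eq_zero_of_not_dvd this]
  have hi₀ : 1 ≤ i₀ ∧ i₀ ≤ p - 1 := by simpa [hI] using hi₀I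
  have hpdvd : p ∣ i₀ := by
    rw [← hfac, ← hnp, Nat.factorization_pow, Finsupp.smul_apply]
    exact Dvd.intro _ rfl
  have := Nat.le_of_dvd (by omega) hpdvd
  omega

lemma sum_normSq_roots (p : ℕ) (hp0 : 0 < p) (ζ : ℂ) (hζ : IsPrimitiveRoot ζ p)
    (A : ℝ) (c : ℕ → ℝ) :
    ∑ j ∈ Finset.range p, Complex.normSq
        ((p : ℂ)⁻¹ * ∑ i ∈ Finset.Icc 1 (p - 1), (c i : ℂ) * (ζ ^ j * (A : ℂ)) ^ i)
      = (p : ℝ)⁻¹ * ∑ i ∈ Finset.Icc 1 (p - 1), c i ^ 2 * A ^ (2 * i) := by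
  have hpC : (p : ℂ) ≠ 0 := Nat.cast_ne_zero.mpr hp0.ne'
  have hζ0 : ζ ≠ 0 := hζ.ne_zero hp0.ne'
  have hζp : ζ ^ p = 1 := hζ.pow_eq_one
  -- conj ζ = ζ ^ (p - 1)
  have hconj : (starRingEnd ℂ) ζ = ζ ^ (p - 1) := by
    have habs : ‖ζ‖ = 1 := hζ.norm'_eq_one hp0.ne'
    have h1 : (starRingEnd ℂ) ζ = ζ⁻¹ := by
      rw [Complex.inv_def, Complex.normSq_eq_norm_sq, habs]
      simp
    rw [h1]
    have h2 : ζ * ζ ^ (p - 1) = 1 := by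
      rw [← pow_succ', Nat.sub_add_cancel hp0, hζp]
    exact inv_eq_of_mul_eq_one_right h2
  set S := Finset.Icc 1 (p - 1) with hS
  set W : ℕ → ℂ := fun j => (p : ℂ)⁻¹ * ∑ i ∈ S, (c i : ℂ) * (ζ ^ j * (A : ℂ)) ^ i with hW
  -- conjugate of the inner sum
  have hconjW : ∀ j : ℕ, (starRingEnd ℂ) (W j)
      = (p : ℂ)⁻¹ * ∑ k ∈ S, (c k : ℂ) * ((ζ ^ (p - 1)) ^ j * (A : ℂ)) ^ k := by
    intro j
    rw [hW]
    simp only [map_mul, map_inv₀, map_natCast, map_sum, map_pow, hconj, Complex.conj_ofReal]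
  -- expand each |W j|^2 as a double sum
  have hexpand : ∀ j : ℕ, W j * (starRingEnd ℂ) (W j)
      = (p : ℂ)⁻¹ * (p : ℂ)⁻¹ *
          ∑ i ∈ S, ∑ k ∈ S, (c i : ℂ) * (c k : ℂ) * (A : ℂ) ^ (i + k) *
            (ζ ^ (i + (p - 1) * k)) ^ j := by
    intro j
    rw [hconjW j, hW, mul_mul_mul_comm, Finset.sum_mul_sum]
    congr 1
    refine Finset.sum_congr rfl fun i _ => Finset.sum_congr rfl fun k _ => ?_
    ring
  -- the inner geometric sums
  have hgeom : ∀ i ∈ S, ∀ k ∈ S,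
      ∑ j ∈ Finset.range p, (ζ ^ (i + (p - 1) * k)) ^ j = if i = k then (p : ℂ) else 0 := by
    intro i hi k hk
    simp only [hS, Finset.mem_Icc] at hi hk
    by_cases h : i = k
    · subst h
      have h1 : ζ ^ (i + (p - 1) * i) = 1 := by
        rw [(hζ.pow_eq_one_iff_dvd _)]
        exact ⟨i, by rw [show i + (p - 1) * i = (1 + (p - 1)) * i from by ring,
          Nat.add_sub_cancel' hp0]⟩
      simp [h1]
    · have hnd : ¬ p ∣ i + (p - 1) * k := by
        intro hdvd
        have hdz : (p : ℤ) ∣ ((i : ℤ) - k) + p * k := by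
          have := Int.natCast_dvd_natCast.mpr hdvd
          convert this using 1
          push_cast [Nat.cast_sub hp0]
          ring
        have hpk : (p : ℤ) ∣ (p : ℤ) * k := ⟨k, rfl⟩
        have hdz2 : (p : ℤ) ∣ (i : ℤ) - k := by simpa using dvd_sub hdz hpk
        have : (i : ℤ) - k = 0 := Int.eq_zero_of_abs_lt_dvd hdz2 (by
          rw [abs_sub_lt_iff]; omega)
        omega
      have hμ1 : ζ ^ (i + (p - 1) * k) ≠ 1 := fun h1 => hnd ((hζ.pow_eq_one_iff_dvd _).mp h1)
      have hμp : (ζ ^ (i + (p - 1) * k)) ^ p = 1 := by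
        rw [← pow_mul, mul_comm, pow_mul, hζp, one_pow]
      rw [geom_sum_eq hμ1, hμp, sub_self, zero_div, if_neg h]
  -- put everything together over ℂ
  apply Complex.ofReal_injective
  push_cast [← Complex.mul_conj]
  calc ∑ j ∈ Finset.range p, W j * (starRingEnd ℂ) (W j)
      = ∑ j ∈ Finset.range p, (p : ℂ)⁻¹ * (p : ℂ)⁻¹ *
          ∑ i ∈ S, ∑ k ∈ S, (c i : ℂ) * (c k : ℂ) * (A : ℂ) ^ (i + k) *
            (ζ ^ (i + (p - 1) * k)) ^ j := Finset.sum_congr rfl fun j _ => hexpand j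
    _ = (p : ℂ)⁻¹ * (p : ℂ)⁻¹ *
          ∑ i ∈ S, ∑ k ∈ S, (c i : ℂ) * (c k : ℂ) * (A : ℂ) ^ (i + k) *
            ∑ j ∈ Finset.range p, (ζ ^ (i + (p - 1) * k)) ^ j := by
        rw [← Finset.mul_sum, Finset.sum_comm]
        congr 1
        refine Finset.sum_congr rfl fun i _ => ?_
        rw [Finset.sum_comm]
        exact Finset.sum_congr rfl fun k _ => (Finset.mul_sum _ _ _).symm
    _ = (p : ℂ)⁻¹ * (p : ℂ)⁻¹ *
          ∑ i ∈ S, (c i : ℂ) * (c i : ℂ) * (A : ℂ) ^ (i + i) * p := by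
        congr 1
        refine Finset.sum_congr rfl fun i hi => ?_
        rw [Finset.sum_eq_single_of_mem i hi]
        · rw [hgeom i hi i hi, if_pos rfl]
        · intro k hk hne
          rw [hgeom i hi k hk, if_neg (Ne.symm hne), mul_zero]
    _ = ((p : ℝ)⁻¹ : ℂ) * ∑ i ∈ S, ((c i : ℂ) ^ 2 * (A : ℂ) ^ (2 * i)) := by
        rw [Finset.mul_sum, Finset.mul_sum]
        refine Finset.sum_congr rfl fun i _ => ?_
        push_cast
        rw [show i + i = 2 * i from by ring]
        field_simp

/-- The squared length of the projection `ν − m/p` of `ν` away from `1`: the sum over all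
`p` complex embeddings `σ` of `K = ℚ(α)` of `|σ(ν − m/p)|²` equals `ν′ − m²/p`. -/
theorem perp_norm_nu_pure_prime_degree_tame
    (p : ℕ) (hp : p.Prime) (hodd : Odd p)
    (a : ℕ → ℕ) (ha : StronglyCarefree p a)
    (m : ℕ) (hm : m = ∏ i ∈ Finset.Icc 1 (p - 1), a i ^ i) (hm1 : 1 < m)
    (α : ℝ) (hαpos : 0 < α) (hαp : α ^ p = (m : ℝ))
    (htame : p ^ 2 ∣ m ^ (p - 1) - 1)
    (ε : ℤ) (hε : (p : ℤ) ^ 2 ∣ ε * (m : ℤ) - 1)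
    (ν : ℝ)
    (hν : ν = ((m : ℝ) + ∑ i ∈ Finset.Icc 1 (p - 1), (ε : ℝ) ^ (i - 1) * α ^ i) / p)
    (ν' : ℝ)
    (hν' : ν' = ((m : ℝ) ^ 2 +
        ∑ i ∈ Finset.Icc 1 (p - 1), (ε : ℝ) ^ (2 * (i - 1)) * α ^ (2 * i)) / p)
    (K : IntermediateField ℚ ℝ) [NumberField K]
    (hK : K = IntermediateField.adjoin ℚ {α})
    (hνK : ν - (m : ℝ) / p ∈ K) :
    ∑ σ : K →+* ℂ, Complex.normSq (σ ⟨ν - (m : ℝ) / p, hνK⟩) = ν' - (m : ℝ) ^ 2 / p := by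
  subst hK
  have hp0 : 0 < p := hp.pos
  have hα0 : α ≠ 0 := ne_of_gt hαpos
  have hirr : Irreducible (Polynomial.X ^ p - Polynomial.C (m : ℚ)) :=
    X_pow_sub_C_irreducible_of_prime hp (not_pth_power p hp a ha m hm hm1)
  have haev : Polynomial.aeval α (Polynomial.X ^ p - Polynomial.C (m : ℚ)) = 0 := by
    simp [hαp]
  have hint : IsIntegral ℚ α :=
    ⟨Polynomial.X ^ p - Polynomial.C (m : ℚ),
      Polynomial.monic_X_pow_sub_C _ hp0.ne', by simpa using haev⟩
  have hmin : minpoly ℚ α = Polynomial.X ^ p - Polynomial.C (m : ℚ) :=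
    (minpoly.eq_of_irreducible_of_monic hirr haev
      (Polynomial.monic_X_pow_sub_C _ hp0.ne')).symm
  haveI fd : FiniteDimensional ℚ (adjoin ℚ {α}) :=
    IntermediateField.adjoin.finiteDimensional hint
  have hrank : Module.finrank ℚ (adjoin ℚ {α}) = p := by
    rw [IntermediateField.adjoin.finrank hint, hmin]
    rw [Polynomial.natDegree_X_pow_sub_C]
  set ζ : ℂ := Complex.exp (2 * Real.pi * Complex.I / p) with hζdef
  have hζ : IsPrimitiveRoot ζ p := Complex.isPrimitiveRoot_exp p hp0.ne'
  have hαC : ((α : ℝ) : ℂ) ^ p = (m : ℂ) := by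
    exact_mod_cast congrArg Complex.ofReal hαp
  have hroot : ∀ j : ℕ, Polynomial.aeval (ζ ^ j * (α : ℂ)) (minpoly ℚ α) = 0 := by
    intro j
    rw [hmin]
    have h1 : (ζ ^ j) ^ p = 1 := by
      rw [← pow_mul, mul_comm, pow_mul, hζ.pow_eq_one, one_pow]
    simp [mul_pow, h1, hαC]
  set pb := IntermediateField.adjoin.powerBasis hint with hpb
  have hpbgen : pb.gen = AdjoinSimple.gen ℚ α := IntermediateField.adjoin.powerBasis_gen hint
  have hminpb : minpoly ℚ pb.gen = minpoly ℚ α := by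
    rw [hpbgen]; exact IntermediateField.minpoly_gen (F := ℚ) (α := α)
  set f : Fin p → ((adjoin ℚ {α}) →ₐ[ℚ] ℂ) :=
    fun j => pb.lift (ζ ^ (j : ℕ) * α) (by exact (congrArg (Polynomial.aeval _) hminpb).trans (hroot j)) with hf
  have hfgen : ∀ j, f j (AdjoinSimple.gen ℚ α) = ζ ^ (j : ℕ) * α := fun j => by
    rw [← hpbgen]; exact pb.lift_gen _ _
  have hαC0 : ((α : ℝ) : ℂ) ≠ 0 := Complex.ofReal_ne_zero.mpr hα0
  have hinj : Function.Injective f := by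
    intro j j' h
    have h1 := congrArg (fun φ => φ (AdjoinSimple.gen ℚ α)) h
    simp only [hfgen] at h1
    exact Fin.ext (hζ.pow_inj j.isLt j'.isLt (mul_right_cancel₀ hαC0 h1))
  have hcard : Fintype.card ((adjoin ℚ {α}) →ₐ[ℚ] ℂ) = p := by
    rw [AlgHom.card]; exact hrank
  have hbij : Function.Bijective f :=
    (Fintype.bijective_iff_injective_and_card f).mpr ⟨hinj, by rw [hcard, Fintype.card_fin]⟩
  -- express the element in terms of the generator
  have hreal : ν - (m : ℝ) / p = (p : ℝ)⁻¹ * ∑ i ∈ Finset.Icc 1 (p - 1), (ε : ℝ) ^ (i - 1) * α ^ i := by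
    rw [hν]
    have hpR : (p : ℝ) ≠ 0 := Nat.cast_ne_zero.mpr hp0.ne'
    field_simp
    ring
  have hgenval : ((AdjoinSimple.gen ℚ α : adjoin ℚ {α}) : ℝ) = α := rfl
  have he : (⟨ν - (m : ℝ) / p, hνK⟩ : adjoin ℚ {α})
      = algebraMap ℚ _ ((p : ℚ)⁻¹) *
        ∑ i ∈ Finset.Icc 1 (p - 1), algebraMap ℚ _ ((ε : ℚ) ^ (i - 1)) * (AdjoinSimple.gen ℚ α) ^ i := by
    apply Subtype.ext
    push_cast
    rw [hgenval, hreal]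
    norm_cast
  have himg : ∀ j : Fin p, f j (⟨ν - (m : ℝ) / p, hνK⟩)
      = (p : ℂ)⁻¹ * ∑ i ∈ Finset.Icc 1 (p - 1),
          (((ε : ℝ) ^ (i - 1) : ℝ) : ℂ) * (ζ ^ (j : ℕ) * (α : ℂ)) ^ i := by
    intro j
    rw [he, map_mul, map_sum, AlgHom.commutes]
    congr 1
    · push_cast
      norm_num
    · refine Finset.sum_congr rfl fun i _ => ?_
      simp only [map_mul, map_pow, AlgHom.commutes, hfgen, map_intCast]
      push_cast
      ring
  have hsum : ∑ σ : (adjoin ℚ {α}) →+* ℂ, Complex.normSq (σ ⟨ν - (m : ℝ) / p, hνK⟩)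
      = ∑ j ∈ Finset.range p, Complex.normSq
          ((p : ℂ)⁻¹ * ∑ i ∈ Finset.Icc 1 (p - 1),
            (((ε : ℝ) ^ (i - 1) : ℝ) : ℂ) * (ζ ^ j * (α : ℂ)) ^ i) := by
    rw [← Fin.sum_univ_eq_sum_range]
    calc ∑ σ : (adjoin ℚ {α}) →+* ℂ, Complex.normSq (σ ⟨ν - (m : ℝ) / p, hνK⟩)
        = ∑ φ : (adjoin ℚ {α}) →ₐ[ℚ] ℂ, Complex.normSq (φ ⟨ν - (m : ℝ) / p, hνK⟩) :=
          Fintype.sum_equiv (RingHom.equivRatAlgHom _ _) _ _ (fun σ => rfl)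
      _ = ∑ j : Fin p, Complex.normSq (f j ⟨ν - (m : ℝ) / p, hνK⟩) :=
          (Fintype.sum_bijective f hbij _ _ (fun j => rfl)).symm
      _ = _ := Finset.sum_congr rfl fun j _ => by rw [himg j]
  rw [hsum, sum_normSq_roots p hp0 ζ hζ α (fun i => (ε : ℝ) ^ (i - 1))]
  rw [hν']
  have hpR : (p : ℝ) ≠ 0 := Nat.cast_ne_zero.mpr hp0.ne'
  rw [show ((m:ℝ)^2 + ∑ i ∈ Finset.Icc 1 (p-1), (ε:ℝ)^(2*(i-1)) * α^(2*i)) / p - (m:ℝ)^2/p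
      = (p:ℝ)⁻¹ * ∑ i ∈ Finset.Icc 1 (p-1), (ε:ℝ)^(2*(i-1)) * α^(2*i) from by
    field_simp; ring]
  congr 1
  refine Finset.sum_congr rfl fun i _ => ?_
  rw [← pow_mul, mul_comm (i-1) 2]
end

section
/- Let p be an odd prime, ℓ = (p−1)/2, (a_1,…,a_{p−1}) a strongly carefree tuple with m = ∏_{i=1}^{p−1} a_i^i > 1, α the real p-th root of m, γ_j = α^j / ∏_{i=1}^{p−1} a_i^{⌊ij/p⌋}, and λ_j = γ_j²/(γ_ℓ γ_{ℓ+1}) for 1 ≤ j ≤ ℓ. Then for every 1 ≤ j ≤ ℓ, λ_j^p = ∏_{i=1}^{ℓ} (a_i/a_{p−i})^{2ij − p − 2p⌊ij/p⌋}. -/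
open Finset

/-- Formula for the `p`-th power of the shape parameters `λ j = γ j ^ 2 / (γ ℓ · γ (ℓ+1))`:
for `1 ≤ j ≤ ℓ = (p−1)/2`, `λ j ^ p = ∏_{i=1}^{ℓ} (a i / a (p−i)) ^ (2ij − p − 2p⌊ij/p⌋)`. -/
theorem shape_parameters_pure_prime_degree
    (p : ℕ) (hp : p.Prime) (hodd : Odd p)
    (ℓ : ℕ) (hℓ : ℓ = (p - 1) / 2)
    (a : ℕ → ℕ) (ha : StronglyCarefree p a)
    (m : ℕ) (hm : m = ∏ i ∈ Finset.Icc 1 (p - 1), a i ^ i) (hm1 : 1 < m)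
    (α : ℝ) (hαpos : 0 < α) (hαp : α ^ p = (m : ℝ))
    (γ : ℕ → ℝ)
    (hγ : ∀ j, γ j = α ^ j / ∏ i ∈ Finset.Icc 1 (p - 1), (a i : ℝ) ^ (i * j / p))
    (lam : ℕ → ℝ) (hlam : ∀ j, lam j = γ j ^ 2 / (γ ℓ * γ (ℓ + 1))) :
    ∀ j ∈ Finset.Icc 1 ℓ,
      lam j ^ p =
        ∏ i ∈ Finset.Icc 1 ℓ,
          ((a i : ℝ) / (a (p - i) : ℝ)) ^
            (2 * (i : ℤ) * (j : ℤ) - (p : ℤ) - 2 * (p : ℤ) * ((i * j / p : ℕ) : ℤ)) := by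
  obtain ⟨hpos, -⟩ := ha
  have hp3 : 3 ≤ p := by
    have h2 := hp.two_le
    obtain ⟨k, hk⟩ := hodd
    omega
  have h2ℓ : 2 * ℓ + 1 = p := by
    obtain ⟨k, hk⟩ := hodd
    omega
  have hApos : ∀ i ∈ Icc 1 (p - 1), (0:ℝ) < (a i : ℝ) := fun i hi => by
    exact_mod_cast (hpos i hi).1
  have hnotdvd : ∀ i ∈ Icc 1 (p - 1), ¬ p ∣ i := by
    intro i hi hdvd
    simp only [mem_Icc] at hi
    have := Nat.le_of_dvd (by omega) hdvd
    omega
  have hmodne : ∀ i ∈ Icc 1 (p-1), ∀ k ∈ Icc 1 (p-1), i * k % p ≠ 0 := by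
    intro i hi k hk h
    have hd : p ∣ i * k := Nat.dvd_of_mod_eq_zero h
    rcases (Nat.Prime.dvd_mul hp).mp hd with h' | h'
    · exact hnotdvd i hi h'
    · exact hnotdvd k hk h'
  have hpair : ∀ i ∈ Icc 1 (p-1), ∀ k ∈ Icc 1 (p-1), ∀ k' ∈ Icc 1 (p-1), k + k' = p →
      i * k % p + i * k' % p = p := by
    intro i hi k hk k' hk' hkk'
    have h1 : i * k % p < p := Nat.mod_lt _ hp.pos
    have h2 : i * k' % p < p := Nat.mod_lt _ hp.pos
    have h3 : i * k % p ≠ 0 := hmodne i hi k hk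
    have h4 : i * k' % p ≠ 0 := hmodne i hi k' hk'
    have h5 : p ∣ (i * k % p + i * k' % p) := by
      apply Nat.dvd_of_mod_eq_zero
      rw [← Nat.add_mod]
      have : i * k + i * k' = i * p := by rw [← Nat.mul_add, hkk']
      rw [this]
      exact Nat.mul_mod_left i p
    obtain ⟨c, hc⟩ := h5
    rcases Nat.lt_or_ge c 2 with h | h
    · interval_cases c <;> omega
    · nlinarith
  have hγp : ∀ k, γ k ^ p = ∏ i ∈ Icc 1 (p-1), (a i : ℝ) ^ (i * k % p) := by
    intro k
    have hnum : (m:ℝ) ^ k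
        = ∏ i ∈ Icc 1 (p-1), ((a i : ℝ) ^ (i*k % p) * (a i : ℝ) ^ (i*k/p*p)) := by
      rw [hm]
      push_cast
      rw [← Finset.prod_pow]
      refine Finset.prod_congr rfl fun i hi => ?_
      rw [← pow_mul, ← pow_add, Nat.mod_add_div']
    have hD : (∏ i ∈ Icc 1 (p-1), (a i : ℝ) ^ (i * k / p)) ^ p
        = ∏ i ∈ Icc 1 (p-1), (a i : ℝ) ^ (i * k / p * p) := by
      rw [← Finset.prod_pow]
      exact Finset.prod_congr rfl fun i _ => by rw [← pow_mul]
    have hDne : (∏ i ∈ Icc 1 (p-1), (a i : ℝ) ^ (i*k/p*p)) ≠ 0 :=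
      Finset.prod_ne_zero_iff.mpr fun i hi => pow_ne_zero _ (hApos i hi).ne'
    rw [hγ k, div_pow, ← pow_mul, mul_comm k p, pow_mul, hαp, hD, hnum,
        Finset.prod_mul_distrib, mul_div_assoc, div_self hDne, mul_one]
  intro j hj
  simp only [mem_Icc] at hj
  have hjm : j ∈ Icc 1 (p-1) := by simp only [mem_Icc]; omega
  have hℓm : ℓ ∈ Icc 1 (p-1) := by simp only [mem_Icc]; omega
  have hℓ1m : ℓ + 1 ∈ Icc 1 (p-1) := by simp only [mem_Icc]; omega
  have key : lam j ^ p
      = ∏ i ∈ Icc 1 (p-1), (a i : ℝ) ^ (2 * ((i*j % p : ℕ) : ℤ) - (p:ℤ)) := by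
    rw [hlam, div_pow, mul_pow, ← pow_mul, mul_comm 2 p, pow_mul, hγp, hγp, hγp,
        ← Finset.prod_pow, ← Finset.prod_mul_distrib, ← Finset.prod_div_distrib]
    refine Finset.prod_congr rfl fun i hi => ?_
    have hA : (0:ℝ) < (a i : ℝ) := hApos i hi
    have hsum : i * ℓ % p + i * (ℓ+1) % p = p := hpair i hi ℓ hℓm (ℓ+1) hℓ1m (by omega)
    rw [← pow_mul, ← pow_add, hsum,
        ← zpow_natCast ((a i:ℝ)) (i*j%p*2), ← zpow_natCast ((a i:ℝ)) p, ← zpow_sub₀ hA.ne']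
    congr 1
    push_cast
    ring
  have hunion : Icc 1 (p-1) = Icc 1 ℓ ∪ Icc (ℓ+1) (p-1) := by
    ext x; simp only [mem_Icc, mem_union]; omega
  have hdisj : Disjoint (Icc 1 ℓ) (Icc (ℓ+1) (p-1)) :=
    Finset.disjoint_left.mpr (by intro x hx hx'; simp only [mem_Icc] at hx hx'; omega)
  have hre : (∏ i ∈ Icc (ℓ+1) (p-1), (a i : ℝ) ^ (2 * ((i*j % p : ℕ) : ℤ) - (p:ℤ)))
      = ∏ i ∈ Icc 1 ℓ, (a (p-i) : ℝ) ^ (2 * (((p-i)*j % p : ℕ) : ℤ) - (p:ℤ)) := by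
    refine Finset.prod_nbij' (fun x => p - x) (fun x => p - x) ?_ ?_ ?_ ?_ ?_
    · intro x hx; simp only [mem_Icc] at *; omega
    · intro x hx; simp only [mem_Icc] at *; omega
    · intro x hx; simp only [mem_Icc] at hx; omega
    · intro x hx; simp only [mem_Icc] at hx; omega
    · intro x hx
      simp only [mem_Icc] at hx
      have : p - (p - x) = x := by omega
      rw [this]
  rw [key, hunion, Finset.prod_union hdisj, hre, ← Finset.prod_mul_distrib]
  refine Finset.prod_congr rfl fun i hi => ?_
  simp only [mem_Icc] at hi
  have him : i ∈ Icc 1 (p-1) := by simp only [mem_Icc]; omega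
  have hpim : p - i ∈ Icc 1 (p-1) := by simp only [mem_Icc]; omega
  have hAi : (0:ℝ) < (a i : ℝ) := hApos i him
  have hApi : (0:ℝ) < (a (p-i) : ℝ) := hApos (p-i) hpim
  have hs : (p-i)*j % p + i*j % p = p := by
    have h := hpair j hjm (p-i) hpim i him (by omega)
    rw [mul_comm j (p-i), mul_comm j i] at h
    exact h
  have hmd : (p:ℤ) * ((i*j/p : ℕ):ℤ) + ((i*j % p : ℕ):ℤ) = (i:ℤ)*(j:ℤ) := by
    exact_mod_cast Nat.div_add_mod (i*j) p
  have hcast : (((p-i)*j % p : ℕ):ℤ) + ((i*j % p : ℕ):ℤ) = (p:ℤ) := by exact_mod_cast hs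
  have h1 : 2 * ((i*j % p : ℕ):ℤ) - (p:ℤ)
      = 2 * (i:ℤ) * (j:ℤ) - (p:ℤ) - 2 * (p:ℤ) * ((i*j/p : ℕ):ℤ) := by
    linear_combination 2 * hmd
  have h2 : 2 * (((p-i)*j % p : ℕ):ℤ) - (p:ℤ)
      = -(2 * (i:ℤ) * (j:ℤ) - (p:ℤ) - 2 * (p:ℤ) * ((i*j/p : ℕ):ℤ)) := by
    linear_combination 2 * hcast - 2 * hmd
  rw [h1, h2, div_zpow, zpow_neg, div_eq_mul_inv]
end

section
/- Let p be an odd prime, ℓ = (p−1)/2, (a_1,…,a_{p−1}) a strongly carefree tuple with m = ∏_{i=1}^{p−1} a_i^i > 1, α the real p-th root of m, K = ℚ(α), γ_j = α^j / ∏_{i=1}^{p−1} a_i^{⌊ij/p⌋}, and λ_j = γ_j²/(γ_ℓ γ_{ℓ+1}). Then for every 1 ≤ j ≤ ℓ, the shape parameter λ_j is irrational and generates K: λ_j ∉ ℚ and ℚ(λ_j) = K. -/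
/-!
Writing `B k = ∏ a i ^ ⌊i k / p⌋`, we have `λ j = c · α ^ (2 j)` with
`c = B ℓ B (ℓ+1) / (m B j ^ 2) ∈ ℚˣ`, because `α ^ (ℓ + (ℓ+1)) = α ^ p = m`. As `2 j < p` is
coprime to `p` and `α ^ p ∈ ℚ`, Bézout gives `α ∈ ℚ(α ^ (2 j)) = ℚ(λ j)`, so `ℚ(λ j) = ℚ(α)`.
Finally `α ∉ ℚ`: a prime dividing `a i` occurs in `m` with exponent `i`, which is not a multiple
of `p`, so `m` is not a `p`-th power.
-/

open Finset

open scoped IntermediateField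

theorem mem_of_pow_mem_of_coprime {L S : Type*} [Field L] [SetLike S L] [SubfieldClass S L]
    {s : S} {x : L} {k n : ℕ} (h : k.Coprime n) (hk : x ^ k ∈ s) (hn : x ^ n ∈ s) : x ∈ s := by
  rcases eq_or_ne x 0 with rfl | hx
  · exact zero_mem s
  have hbezout : x = (x ^ k) ^ k.gcdA n * (x ^ n) ^ k.gcdB n := by
    rw [← zpow_natCast, ← zpow_natCast x n, ← zpow_mul, ← zpow_mul, ← zpow_add₀ hx,
      ← Nat.gcd_eq_gcd_ab, h, Nat.cast_one, zpow_one]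
  rw [hbezout]
  exact mul_mem (zpow_mem hk _) (zpow_mem hn _)

theorem adjoin_simple_mul_pow_eq {F L : Type*} [Field F] [Field L] [Algebra F L] {c x : L}
    {k n : ℕ} (hc : c ∈ (⊥ : IntermediateField F L)) (hc0 : c ≠ 0) (h : k.Coprime n)
    (hn : x ^ n ∈ (⊥ : IntermediateField F L)) : F⟮c * x ^ k⟯ = F⟮x⟯ := by
  apply le_antisymm
  · rw [IntermediateField.adjoin_simple_le_iff]
    exact mul_mem (bot_le (a := F⟮x⟯) hc)
      (pow_mem (IntermediateField.mem_adjoin_simple_self F x) k)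
  · rw [IntermediateField.adjoin_simple_le_iff]
    have hk : c⁻¹ * (c * x ^ k) ∈ F⟮c * x ^ k⟯ :=
      mul_mem (inv_mem (bot_le (a := F⟮c * x ^ k⟯) hc))
        (IntermediateField.mem_adjoin_simple_self F _)
    rw [inv_mul_cancel_left₀ hc0] at hk
    exact mem_of_pow_mem_of_coprime h hk (bot_le (a := F⟮c * x ^ k⟯) hn)

theorem irrational_iff_adjoin_ne_bot (x : ℝ) : Irrational x ↔ ℚ⟮x⟯ ≠ ⊥ := by
  rw [Ne, IntermediateField.adjoin_simple_eq_bot_iff, IntermediateField.mem_bot]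
  rfl

theorem irrational_of_pow_eq_natCast {x : ℝ} {n m : ℕ} (hn : 0 < n) (hx : x ^ n = m)
    (hm : ∀ k : ℕ, k ^ n ≠ m) : Irrational x := by
  refine irrational_nrt_of_notint_nrt n m (mod_cast hx) ?_ hn
  rintro ⟨y, rfl⟩
  apply hm y.natAbs
  rw [← Int.natAbs_pow, ← Int.natAbs_natCast m]
  exact congrArg Int.natAbs (mod_cast hx)

namespace StronglyCarefree

variable {p : ℕ} {a : ℕ → ℕ}

theorem factorization_prod_pow (ha : StronglyCarefree p a) {i q : ℕ}
    (hi : i ∈ Icc 1 (p - 1)) (hq : q.Prime) (hqi : q ∣ a i) :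
    (∏ k ∈ Icc 1 (p - 1), a k ^ k).factorization q = i := by
  rw [Nat.factorization_prod fun k hk => pow_ne_zero _ (ha.1 k hk).1.ne', Finset.sum_apply',
    Finset.sum_eq_single_of_mem i hi]
  · simp [Nat.factorization_eq_one_of_squarefree (ha.1 i hi).2 hq hqi]
  · intro k hk hki
    have hqk : ¬ q ∣ a k := fun hqk =>
      hq.one_lt.ne' (Nat.eq_one_of_dvd_one (ha.2 i hi k hk hki.symm ▸ Nat.dvd_gcd hqi hqk))
    simp [Nat.factorization_eq_zero_of_not_dvd hqk]

theorem pow_ne_prod_pow (ha : StronglyCarefree p a) (h1 : ∏ i ∈ Icc 1 (p - 1), a i ^ i ≠ 1)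
    (n : ℕ) : n ^ p ≠ ∏ i ∈ Icc 1 (p - 1), a i ^ i := by
  intro hn
  obtain ⟨i, hi, hai⟩ : ∃ i ∈ Icc 1 (p - 1), a i ≠ 1 := by
    by_contra! h
    exact h1 (Finset.prod_eq_one fun i hi => by rw [h i hi, one_pow])
  obtain ⟨q, hq, hqi⟩ := Nat.exists_prime_and_dvd hai
  have hpi : p ∣ i := ⟨n.factorization q, by
    rw [← ha.factorization_prod_pow hi hq hqi, ← hn, Nat.factorization_pow]; rfl⟩
  obtain ⟨hi1, hip⟩ := Finset.mem_Icc.mp hi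
  have hpi' := Nat.le_of_dvd (by omega) hpi
  omega

end StronglyCarefree

theorem shape_parameter_generates_pure_prime_degree_general
    (p : ℕ) (hp : p.Prime) (hodd : Odd p)
    (ℓ : ℕ) (hℓ : ℓ = (p - 1) / 2)
    (a : ℕ → ℕ) (ha : StronglyCarefree p a)
    (m : ℕ) (hm : m = ∏ i ∈ Finset.Icc 1 (p - 1), a i ^ i) (hm1 : 1 < m)
    (α : ℝ) (hαp : α ^ p = (m : ℝ))
    (γ : ℕ → ℝ)
    (hγ : ∀ j, γ j = α ^ j / ∏ i ∈ Finset.Icc 1 (p - 1), (a i : ℝ) ^ (i * j / p))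
    (lam : ℕ → ℝ) (hlam : ∀ j, lam j = γ j ^ 2 / (γ ℓ * γ (ℓ + 1)))
    (K : IntermediateField ℚ ℝ) (hK : K = IntermediateField.adjoin ℚ {α}) :
    ∀ j ∈ Finset.Icc 1 ℓ,
      Irrational (lam j) ∧ IntermediateField.adjoin ℚ {lam j} = K := by
  intro j hj
  obtain ⟨hj1, hjℓ⟩ := Finset.mem_Icc.mp hj
  set B : ℕ → ℚ := fun k => ∏ i ∈ Icc 1 (p - 1), (a i : ℚ) ^ (i * k / p)
  have hB0 (k : ℕ) : B k ≠ 0 :=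
    Finset.prod_ne_zero_iff.mpr fun i hi => pow_ne_zero _ (mod_cast (ha.1 i hi).1.ne')
  have hγB (k : ℕ) : γ k = α ^ k / B k := by simp [B, hγ]
  have hp_eq : p = ℓ + (ℓ + 1) := by obtain ⟨t, rfl⟩ := hodd; omega
  have hlam_eq : lam j = ((B ℓ * B (ℓ + 1) / (m * B j ^ 2) : ℚ) : ℝ) * α ^ (2 * j) := by
    rw [hlam, hγB, hγB, hγB]
    push_cast
    rw [← hαp, hp_eq]
    simp only [div_eq_mul_inv, mul_inv, inv_inv]
    ring
  have hadjoin : IntermediateField.adjoin ℚ {lam j} = K := by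
    rw [hK, hlam_eq]
    refine adjoin_simple_mul_pow_eq (SubfieldClass.ratCast_mem ⊥ _) ?_
      (Nat.coprime_of_lt_prime (by omega) (by omega) hp).symm (hαp ▸ natCast_mem ⊥ m)
    have : m ≠ 0 := by omega
    simp [hB0, this]
  have hα : Irrational α :=
    irrational_of_pow_eq_natCast hp.pos hαp (hm ▸ ha.pow_ne_prod_pow (hm ▸ hm1.ne'))
  refine ⟨?_, hadjoin⟩
  rw [irrational_iff_adjoin_ne_bot, hadjoin, hK, ← irrational_iff_adjoin_ne_bot]
  exact hα

/-- Each shape parameter `λ j = γ j ^ 2 / (γ ℓ · γ (ℓ+1))`, `1 ≤ j ≤ ℓ`, of a pure prime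
degree field `K = ℚ(α)` is irrational and generates `K`: `λ j ∉ ℚ` and `ℚ(λ j) = K`. -/
theorem shape_parameter_generates_pure_prime_degree
    (p : ℕ) (hp : p.Prime) (hodd : Odd p)
    (ℓ : ℕ) (hℓ : ℓ = (p - 1) / 2)
    (a : ℕ → ℕ) (ha : StronglyCarefree p a)
    (m : ℕ) (hm : m = ∏ i ∈ Finset.Icc 1 (p - 1), a i ^ i) (hm1 : 1 < m)
    (α : ℝ) (hαpos : 0 < α) (hαp : α ^ p = (m : ℝ))
    (γ : ℕ → ℝ)
    (hγ : ∀ j, γ j = α ^ j / ∏ i ∈ Finset.Icc 1 (p - 1), (a i : ℝ) ^ (i * j / p))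
    (lam : ℕ → ℝ) (hlam : ∀ j, lam j = γ j ^ 2 / (γ ℓ * γ (ℓ + 1)))
    (K : IntermediateField ℚ ℝ) (hK : K = IntermediateField.adjoin ℚ {α}) :
    ∀ j ∈ Finset.Icc 1 ℓ,
      Irrational (lam j) ∧ IntermediateField.adjoin ℚ {lam j} = K :=
  shape_parameter_generates_pure_prime_degree_general p hp hodd ℓ hℓ a ha m hm hm1 α hαp γ hγ lam
    hlam K hK
end

section
/- Let p be an odd prime and let m, m' be positive rational numbers greater than 1, neither of which is the p-th power of a rational number; let α and α' be their unique real p-th roots. Then ℚ(α) = ℚ(α') as subfields of ℝ if and only if there exist an integer i with 1 ≤ i ≤ p−1 (equivalently, gcd(i,p) = 1) and a rational number γ > 0 such that m' = γ^p · m^i. -/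
/-!
If `ℚ(α) = ℚ(α')`, then `α' = g(α)` for some `g ∈ ℚ[X]` of degree `< p`. For a primitive `p`-th
root of unity `ζ`, `ζα` is a conjugate of `α`, so `g(ζα)` is again a `p`-th root of `m'`, that is
`g(ζα) = ζ^i g(α)`. As `p ∤ [ℚ(ζ) : ℚ] = p - 1`, the polynomial `X^p - m` stays irreducible over
`ℚ(ζ)`, so `1, α, …, α^(p-1)` are linearly independent over `ℚ(ζ)`; comparing coefficients in
`g(ζα) = ζ^i g(α)` kills every coefficient of `g` but the `i`-th, hence `α' = γ α^i`.
Conversely `γ α^i ∈ ℚ(α)`, and both fields have degree `p` over `ℚ`.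
-/

open Polynomial IntermediateField

section PurePower

variable {K : Type*} [Field K] {p : ℕ}

theorem minpoly_eq_X_pow_sub_C_of_prime {L : Type*} [Ring L] [Nontrivial L] [Algebra K L]
    (hp : p.Prime) {a : K} (ha : ∀ b : K, b ^ p ≠ a) {x : L} (hx : x ^ p = algebraMap K L a) :
    minpoly K x = X ^ p - C a :=
  (minpoly.eq_of_irreducible_of_monic (X_pow_sub_C_irreducible_of_prime hp ha)
    (by simp [hx]) (monic_X_pow_sub_C a hp.ne_zero)).symm

theorem finrank_adjoin_eq_of_pow_eq_algebraMap {L : Type*} [Field L] [Algebra K L]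
    (hp : p.Prime) {a : K} (ha : ∀ b : K, b ^ p ≠ a) {x : L} (hx : x ^ p = algebraMap K L a) :
    Module.finrank K K⟮x⟯ = p := by
  have hint : IsIntegral K x := .of_pow hp.pos (hx ▸ isIntegral_algebraMap)
  rw [adjoin.finrank hint, minpoly_eq_X_pow_sub_C_of_prime hp ha hx, natDegree_X_pow_sub_C]

theorem pow_ne_algebraMap_of_not_dvd_finrank {F : Type*} [Field F] [Algebra K F]
    [FiniteDimensional K F] (hp : p.Prime) (hpF : ¬ p ∣ Module.finrank K F) {a : K}
    (ha : ∀ b : K, b ^ p ≠ a) (b : F) : b ^ p ≠ algebraMap K F a := fun hb ↦ hpF <| by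
  simpa [minpoly_eq_X_pow_sub_C_of_prime hp ha hb] using
    minpoly.degree_dvd (IsIntegral.of_finite K b)

end PurePower

theorem exists_natDegree_lt_aeval_eq {K L : Type*} [CommRing K] [Ring L] [Nontrivial L]
    [Algebra K L] {x : L} (hx : IsIntegral K x) (f : K[X]) :
    ∃ g : K[X], g.natDegree < (minpoly K x).natDegree ∧ aeval x g = aeval x f :=
  ⟨f %ₘ minpoly K x, natDegree_modByMonic_lt f (minpoly.monic hx) (minpoly.ne_one K x),
    minpoly.aeval_modByMonic_minpoly f x⟩

theorem natDegree_comp_C_mul_X_le {R : Type*} [CommSemiring R] (g : R[X]) (r : R) :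
    (g.comp (C r * X)).natDegree ≤ g.natDegree :=
  calc (g.comp (C r * X)).natDegree ≤ g.natDegree * (C r * X).natDegree := natDegree_comp_le
    _ ≤ g.natDegree * 1 := by gcongr; exact (natDegree_C_mul_le _ _).trans natDegree_X_le
    _ = g.natDegree := mul_one _

theorem eq_C_mul_X_pow_of_aeval_primitiveRoot_mul {F E : Type*} [Field F] [Ring E] [Algebra F E]
    {p i : ℕ} {ζ : F} (hζ : IsPrimitiveRoot ζ p) (hi : i < p) {x : E}
    (hx : (minpoly F x).natDegree = p) {g : F[X]} (hg : g.natDegree < p)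
    (h : aeval (algebraMap F E ζ * x) g = algebraMap F E (ζ ^ i) * aeval x g) :
    g = C (g.coeff i) * X ^ i := by
  set q := g.comp (C ζ * X) - C (ζ ^ i) * g
  have hq : q = 0 := by
    by_contra hq
    have hqx : aeval x q = 0 := by simp [q, aeval_comp, h]
    have hqdeg : q.natDegree < p :=
      ((natDegree_sub_le_of_le (natDegree_comp_C_mul_X_le g ζ) (natDegree_C_mul_le _ _)).trans
        (max_self _).le).trans_lt hg
    have := natDegree_le_natDegree (minpoly.degree_le_of_ne_zero F x hq hqx)
    omega
  ext j
  rw [coeff_C_mul_X_pow]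
  split_ifs with hji
  · rw [hji]
  obtain hj | hj := lt_or_ge j p
  · have hqj := congr_arg (coeff · j) hq
    simp only [q, coeff_sub, comp_C_mul_X_coeff, coeff_C_mul, coeff_zero] at hqj
    have hζji : ζ ^ j - ζ ^ i ≠ 0 := sub_ne_zero.mpr fun h ↦ hji (hζ.pow_inj hj hi h)
    exact (mul_eq_zero.mp (by linear_combination hqj)).resolve_right hζji
  · exact coeff_eq_zero_of_natDegree_lt (hg.trans_le hj)

theorem exists_aeval_eq_primitiveRoot_pow_mul {K L : Type*} [Field K] [Field L] [Algebra K L]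
    {p : ℕ} [NeZero p] {ζ : L} (hζ : IsPrimitiveRoot ζ p) {x y : L}
    (hy : aeval y (minpoly K x) = 0) {g : K[X]} {b : K} (hgx : aeval x g ^ p = algebraMap K L b)
    (hgx0 : aeval x g ≠ 0) : ∃ i < p, aeval y g = ζ ^ i * aeval x g := by
  have hgy : aeval y g ^ p = algebraMap K L b := by
    have hx : aeval x (g ^ p - C b) = 0 := by simp [hgx]
    simpa [sub_eq_zero] using aeval_eq_zero_of_dvd_aeval_eq_zero (minpoly.dvd K x hx) hy
  obtain ⟨i, hi, hζi⟩ := hζ.eq_pow_of_pow_eq_one (ξ := aeval y g / aeval x g)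
    (by rw [div_pow, hgy, ← hgx, div_self (pow_ne_zero _ hgx0)])
  exact ⟨i, hi, by rw [hζi, div_mul_cancel₀ _ hgx0]⟩

theorem minpoly_adjoin_primitiveRoot_eq_X_pow_sub_C {L : Type*} [Field L] [CharZero L] {p : ℕ}
    (hp : p.Prime) {ζ : L} (hζ : IsPrimitiveRoot ζ p) {m : ℚ} (hm : ∀ r : ℚ, r ^ p ≠ m) {x : L}
    (hx : x ^ p = algebraMap ℚ L m) : minpoly ℚ⟮ζ⟯ x = X ^ p - C (algebraMap ℚ ℚ⟮ζ⟯ m) := by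
  have hζint : IsIntegral ℚ ζ := (hζ.isIntegral hp.pos).tower_top
  have : FiniteDimensional ℚ ℚ⟮ζ⟯ := adjoin.finiteDimensional hζint
  have hF : Module.finrank ℚ ℚ⟮ζ⟯ = p - 1 := by
    rw [adjoin.finrank hζint, ← cyclotomic_eq_minpoly_rat hζ hp.pos, natDegree_cyclotomic,
      Nat.totient_prime hp]
  have hpF : ¬ p ∣ Module.finrank ℚ ℚ⟮ζ⟯ :=
    hF ▸ Nat.not_dvd_of_pos_of_lt (Nat.sub_pos_of_lt hp.one_lt) (Nat.sub_lt hp.pos one_pos)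
  exact minpoly_eq_X_pow_sub_C_of_prime hp (pow_ne_algebraMap_of_not_dvd_finrank hp hpF hm)
    (by rw [← IsScalarTower.algebraMap_apply, hx])

theorem exists_eq_rat_mul_pow_of_aeval_eq {L : Type*} [Field L] [CharZero L] {p : ℕ}
    (hp : p.Prime) {ζ : L} (hζ : IsPrimitiveRoot ζ p) {m m' : ℚ} (hm : ∀ r : ℚ, r ^ p ≠ m)
    {x x' : L} (hx : x ^ p = m) (hx' : x' ^ p = m') (hx'0 : x' ≠ 0)
    {f : ℚ[X]} (hf : aeval x f = x') : ∃ i < p, ∃ γ : ℚ, x' = γ * x ^ i := by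
  have : NeZero p := ⟨hp.ne_zero⟩
  rw [← eq_ratCast (algebraMap ℚ L)] at hx hx'
  have hmin : minpoly ℚ x = X ^ p - C m := minpoly_eq_X_pow_sub_C_of_prime hp hm hx
  obtain ⟨g, hdeg, hg⟩ := exists_natDegree_lt_aeval_eq
    (IsIntegral.of_pow hp.pos (hx ▸ isIntegral_algebraMap)) f
  rw [hmin, natDegree_X_pow_sub_C] at hdeg
  rw [hf] at hg
  obtain ⟨i, hi, hconj⟩ := exists_aeval_eq_primitiveRoot_pow_mul hζ (y := ζ * x)
    (by simp [hmin, mul_pow, hζ.pow_eq_one, hx]) (hg ▸ hx') (hg ▸ hx'0)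
  have hminF := minpoly_adjoin_primitiveRoot_eq_X_pow_sub_C hp hζ hm hx
  have hζF : IsPrimitiveRoot (AdjoinSimple.gen ℚ ζ) p :=
    hζ.of_map_of_injective (f := algebraMap ℚ⟮ζ⟯ L) (FaithfulSMul.algebraMap_injective _ _)
  have hmono := eq_C_mul_X_pow_of_aeval_primitiveRoot_mul hζF hi
    (by rw [hminF, natDegree_X_pow_sub_C]) (g := g.map (algebraMap ℚ ℚ⟮ζ⟯))
    (by rwa [natDegree_map]) (by simpa [aeval_map_algebraMap] using hconj)
  refine ⟨i, hi, g.coeff i, ?_⟩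
  rw [← hg, ← aeval_map_algebraMap ℚ⟮ζ⟯, hmono]
  simp

theorem exists_eq_rat_mul_pow_of_mem_adjoin {p : ℕ} (hp : p.Prime) {m m' : ℚ}
    (hm : ∀ r : ℚ, r ^ p ≠ m) {α α' : ℝ} (hα : α ^ p = m) (hα' : α' ^ p = m') (hα'0 : α' ≠ 0)
    (h : α' ∈ ℚ⟮α⟯) : ∃ i < p, ∃ γ : ℚ, α' = γ * α ^ i := by
  have hint : IsIntegral ℚ α :=
    .of_pow hp.pos (by rw [hα, ← eq_ratCast (algebraMap ℚ ℝ)]; exact isIntegral_algebraMap)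
  rw [← mem_toSubalgebra, adjoin_simple_toSubalgebra_of_isAlgebraic hint.isAlgebraic] at h
  obtain ⟨f, hf⟩ := Algebra.adjoin_mem_exists_aeval ℚ α h
  obtain ⟨i, hi, γ, hγ⟩ := exists_eq_rat_mul_pow_of_aeval_eq hp
    (Complex.isPrimitiveRoot_exp p hp.ne_zero) hm (x := α) (x' := α')
    (by exact_mod_cast hα) (by exact_mod_cast hα') (by exact_mod_cast hα'0)
    (by rw [← hf]; simpa using aeval_algebraMap_apply ℂ α f)
  exact ⟨i, hi, γ, by exact_mod_cast hγ⟩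

theorem ofReal_eq_rat_mul_pow_iff {p i : ℕ} (hp : p ≠ 0) {m m' γ : ℚ} (hγ : 0 ≤ γ) {α α' : ℝ}
    (hα : 0 ≤ α) (hαp : α ^ p = m) (hα' : 0 ≤ α') (hα'p : α' ^ p = m') :
    α' = γ * α ^ i ↔ m' = γ ^ p * m ^ i := by
  rw [← pow_left_inj₀ hα' (by positivity) hp, hα'p, mul_pow, ← pow_mul, mul_comm i, pow_mul, hαp]
  exact_mod_cast Iff.rfl

theorem pure_prime_degree_field_eq_iff_general
    (p : ℕ) (hp : p.Prime)
    (m m' : ℚ)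
    (hmp : ¬ ∃ r : ℚ, r ^ p = m) (hmp' : ¬ ∃ r : ℚ, r ^ p = m')
    (α α' : ℝ) (hαpos : 0 < α) (hαp : α ^ p = (m : ℝ))
    (hα'pos : 0 < α') (hα'p : α' ^ p = (m' : ℝ)) :
    IntermediateField.adjoin ℚ {α} = IntermediateField.adjoin ℚ {α'} ↔
      ∃ i : ℕ, 1 ≤ i ∧ i ≤ p - 1 ∧ ∃ γ : ℚ, 0 < γ ∧ m' = γ ^ p * m ^ i := by
  have hma : ∀ r : ℚ, r ^ p ≠ m := fun r hr ↦ hmp ⟨r, hr⟩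
  have hma' : ∀ r : ℚ, r ^ p ≠ m' := fun r hr ↦ hmp' ⟨r, hr⟩
  have hαm : α ^ p = algebraMap ℚ ℝ m := by rw [eq_ratCast (algebraMap ℚ ℝ)]; exact hαp
  have hα'm' : α' ^ p = algebraMap ℚ ℝ m' := by rw [eq_ratCast (algebraMap ℚ ℝ)]; exact hα'p
  constructor
  · intro h
    obtain ⟨i, hi, γ, hγα⟩ := exists_eq_rat_mul_pow_of_mem_adjoin hp hma hαp hα'p hα'pos.ne'
      (h ▸ mem_adjoin_simple_self ℚ α')
    have hγ : 0 < γ := by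
      exact_mod_cast pos_of_mul_pos_left (hγα ▸ hα'pos) (pow_pos hαpos i).le
    have hm' := (ofReal_eq_rat_mul_pow_iff hp.ne_zero hγ.le hαpos.le hαp hα'pos.le hα'p).1 hγα
    refine ⟨i, Nat.one_le_iff_ne_zero.2 ?_, by omega, γ, hγ, hm'⟩
    rintro rfl
    exact hma' γ (by simpa using hm'.symm)
  · rintro ⟨i, -, -, γ, hγ, hm'⟩
    have hγα := (ofReal_eq_rat_mul_pow_iff hp.ne_zero hγ.le hαpos.le hαp hα'pos.le hα'p).2 hm'
    have hle : ℚ⟮α'⟯ ≤ ℚ⟮α⟯ := adjoin_simple_le_iff.2 <| hγα ▸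
      mul_mem (IntermediateField.algebraMap_mem _ γ) (pow_mem (mem_adjoin_simple_self ℚ α) i)
    have hfin := finrank_adjoin_eq_of_pow_eq_algebraMap hp hma hαm
    have : FiniteDimensional ℚ ℚ⟮α⟯ := Module.finite_of_finrank_pos (hfin ▸ hp.pos)
    exact (eq_of_le_of_finrank_eq hle <| by
      rw [hfin, finrank_adjoin_eq_of_pow_eq_algebraMap hp hma' hα'm']).symm

/-- Two pure prime degree fields `ℚ(m^(1/p))` and `ℚ(m'^(1/p))` inside `ℝ` coincide if and
only if `m' = γ^p · m^i` for some `1 ≤ i ≤ p−1` and some positive rational `γ`. -/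
theorem pure_prime_degree_field_eq_iff
    (p : ℕ) (hp : p.Prime) (hodd : Odd p)
    (m m' : ℚ) (hm : 1 < m) (hm' : 1 < m')
    (hmp : ¬ ∃ r : ℚ, r ^ p = m) (hmp' : ¬ ∃ r : ℚ, r ^ p = m')
    (α α' : ℝ) (hαpos : 0 < α) (hαp : α ^ p = (m : ℝ))
    (hα'pos : 0 < α') (hα'p : α' ^ p = (m' : ℝ)) :
    IntermediateField.adjoin ℚ {α} = IntermediateField.adjoin ℚ {α'} ↔
      ∃ i : ℕ, 1 ≤ i ∧ i ≤ p - 1 ∧ ∃ γ : ℚ, 0 < γ ∧ m' = γ ^ p * m ^ i :=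
  pure_prime_degree_field_eq_iff_general p hp m m' hmp hmp' α α' hαpos hαp hα'pos hα'p
end

section
/- Let p be an odd prime. Consider the set of strongly carefree tuples (a_1,…,a_{p−1}) of positive integers with ∏_{i=1}^{p−1} a_i^i > 1, with the group (ℤ/pℤ)ˣ acting by index permutation: an element k ∈ (ℤ/pℤ)ˣ sends (a_1,…,a_{p−1}) to (a_{σ_k(1)},…,a_{σ_k(p−1)}), where σ_k(i) is the unique element of {1,…,p−1} congruent to k·i modulo p. Then the map sending a tuple to the subfield ℚ((∏_{i=1}^{p−1} a_i^i)^{1/p}) of ℝ descends to a bijection between the set of orbits of this action and the set of subfields of ℝ of the form ℚ(m^{1/p}) with m an integer, m > 1, m not divisible by the p-th power of any prime (i.e., the set of isomorphism classes of pure prime degree p number fields). -/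
open Finset

/-- The pure prime degree field attached to a strongly carefree tuple:
`ℚ((∏ i, a i ^ i)^(1/p)) ⊆ ℝ`, using the real `p`-th root. -/
noncomputable def pureField (p : ℕ) (a : ℕ → ℕ) : IntermediateField ℚ ℝ :=
  IntermediateField.adjoin ℚ
    {((∏ i ∈ Finset.Icc 1 (p - 1), a i ^ i : ℕ) : ℝ) ^ ((p : ℝ)⁻¹)}

/-- Two strongly carefree tuples are in the same orbit of the `(ℤ/pℤ)ˣ`-action by index
permutation: some `k` coprime to `p` satisfies `a' i = a ((k·i) mod p)` for `1 ≤ i ≤ p−1`. -/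
def SameOrbit (p : ℕ) (a a' : ℕ → ℕ) : Prop :=
  ∃ k : ℕ, Nat.Coprime k p ∧ ∀ i ∈ Finset.Icc 1 (p - 1), a' i = a (k * i % p)

/-- A pure prime degree `p` field: a subfield of `ℝ` of the form `ℚ(m^(1/p))` for an
integer `m > 1` not divisible by the `p`-th power of any prime. -/
def IsPureField (p : ℕ) (K : IntermediateField ℚ ℝ) : Prop :=
  ∃ m : ℕ, 1 < m ∧ (∀ q : ℕ, q.Prime → ¬ q ^ p ∣ m) ∧
    K = IntermediateField.adjoin ℚ {((m : ℕ) : ℝ) ^ ((p : ℝ)⁻¹)}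

/-!
Write `m = ∏ aᵢ ^ i`. For a strongly carefree tuple the exponent of a prime `q` in `m` is the
index `i` with `q ∣ aᵢ`, so the tuple is recovered from `m` as `aᵢ = ∏_{v_q(m) = i} q`, and the
values of `m` are exactly the `p`-th-power-free integers.

If `m'^(1/p) ∈ ℚ(m^(1/p))`, compare the real embedding of this degree-`p` field with the one
sending `m^(1/p)` to `ζ m^(1/p)`, `ζ` a primitive `p`-th root of unity: this forces
`m'^(1/p) = r m^(j/p)` with `r` rational, so `v_q(m') ≡ j v_q(m) (mod p)` for every prime `q`,
i.e. the tuple of `m'` is that of `m` with indices multiplied by `j⁻¹` modulo `p`.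
Conversely, if the tuples differ by `i ↦ k i` and `K k ≡ 1`, then `m' t^p = m^K` for an
integer `t`, so `m'^(1/p) = (m^(1/p))^K / t`.
-/

open Polynomial IntermediateField Module

theorem lt_of_mem_Icc_sub_one {p i : ℕ} (hi : i ∈ Icc 1 (p - 1)) : i < p := by
  have := mem_Icc.1 hi; omega

theorem mul_mod_mem_Icc {p k i : ℕ} (hp : p.Prime) (hk : k.Coprime p) (hi : i ∈ Icc 1 (p - 1)) :
    k * i % p ∈ Icc 1 (p - 1) := by
  obtain ⟨hi1, hip⟩ := mem_Icc.1 hi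
  have hndvd : ¬ p ∣ k * i := hp.prime.dvd_mul.not.2 <| not_or.2
    ⟨(Nat.Prime.coprime_iff_not_dvd hp).1 hk.symm, Nat.not_dvd_of_pos_of_lt hi1 (by omega)⟩
  have := Nat.mod_lt (k * i) hp.pos
  have := Nat.pos_of_ne_zero (mt Nat.dvd_of_mod_eq_zero hndvd)
  rw [mem_Icc]; omega

theorem mul_mod_mul_mod_of_mul_mod_eq_one {p k K i : ℕ} (h : K * k % p = 1) (hi : i < p) :
    K * (k * i % p) % p = i := by
  rw [Nat.mul_mod, Nat.mod_mod, ← Nat.mul_mod, ← mul_assoc, Nat.mul_mod, h, one_mul, Nat.mod_mod,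
    Nat.mod_eq_of_lt hi]

theorem exists_coprime_mul_mod_eq_one {p k : ℕ} (hp : p.Prime) (hk : k.Coprime p) :
    ∃ K, K.Coprime p ∧ K * k % p = 1 := by
  obtain ⟨K, -, hK⟩ := Nat.exists_mul_mod_eq_one_of_coprime hk hp.one_lt
  refine ⟨K, Nat.coprime_of_mul_modEq_one k ?_, by rwa [mul_comm]⟩
  rwa [Nat.ModEq, mul_comm, Nat.mod_eq_of_lt hp.one_lt]

theorem SameOrbit.symm {p : ℕ} (hp : p.Prime) {a a' : ℕ → ℕ} (h : SameOrbit p a a') :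
    SameOrbit p a' a := by
  obtain ⟨k, hk, hkaa'⟩ := h
  obtain ⟨K, hK, hKk⟩ := exists_coprime_mul_mod_eq_one hp hk
  refine ⟨K, hK, fun i hi => ?_⟩
  rw [hkaa' _ (mul_mod_mem_Icc hp hK hi),
    mul_mod_mul_mod_of_mul_mod_eq_one (by rwa [mul_comm]) (lt_of_mem_Icc_sub_one hi)]

theorem SameOrbit.exists_prod_mul_pow_eq_pow {p : ℕ} (hp : p.Prime) {a a' : ℕ → ℕ}
    (h : SameOrbit p a a') : ∃ K t : ℕ,
      (∏ i ∈ Icc 1 (p - 1), a' i ^ i) * t ^ p = (∏ i ∈ Icc 1 (p - 1), a i ^ i) ^ K := by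
  obtain ⟨k, hk, hkaa'⟩ := h
  obtain ⟨K, hK, hKk⟩ := exists_coprime_mul_mod_eq_one hp hk
  have hreindex : ∏ i ∈ Icc 1 (p - 1), a' i ^ i = ∏ j ∈ Icc 1 (p - 1), a j ^ (K * j % p) :=
    prod_nbij' (k * · % p) (K * · % p) (fun i hi => mul_mod_mem_Icc hp hk hi)
      (fun j hj => mul_mod_mem_Icc hp hK hj)
      (fun i hi => mul_mod_mul_mod_of_mul_mod_eq_one hKk (lt_of_mem_Icc_sub_one hi))
      (fun j hj =>
        mul_mod_mul_mod_of_mul_mod_eq_one (by rwa [mul_comm]) (lt_of_mem_Icc_sub_one hj))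
      (fun i hi => by
        rw [hkaa' i hi, mul_mod_mul_mod_of_mul_mod_eq_one hKk (lt_of_mem_Icc_sub_one hi)])
  refine ⟨K, ∏ j ∈ Icc 1 (p - 1), a j ^ (K * j / p), ?_⟩
  rw [hreindex, ← prod_pow, ← prod_pow, ← prod_mul_distrib]
  refine prod_congr rfl fun j _ => ?_
  rw [← pow_mul, ← pow_mul, ← pow_add, Nat.mod_add_div', mul_comm]

theorem ZMod.natCast_inj_of_lt {p a b : ℕ} (ha : a < p) (hb : b < p) :
    (a : ZMod p) = b ↔ a = b := by
  rw [ZMod.natCast_eq_natCast_iff', Nat.mod_eq_of_lt ha, Nat.mod_eq_of_lt hb]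

theorem natCast_factorization_eq_mul_of_cast_eq_pow_mul {p M M' j : ℕ} {r : ℚ} (hM : M ≠ 0)
    (hM' : M' ≠ 0) (h : (M' : ℚ) = r ^ p * M ^ j) (q : ℕ) :
    (M'.factorization q : ZMod p) = j * M.factorization q := by
  by_cases hq : q.Prime
  · have : Fact q.Prime := ⟨hq⟩
    have hr : r ^ p ≠ 0 := left_ne_zero_of_mul (h ▸ Nat.cast_ne_zero.2 hM')
    have hval := congrArg (padicValRat q) h
    rw [padicValRat.mul hr (by positivity), padicValRat.pow, padicValRat.pow, padicValRat.of_nat,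
      padicValRat.of_nat] at hval
    have := congrArg (Int.cast : ℤ → ZMod p) hval
    push_cast at this
    simpa [Nat.factorization_def _ hq] using this
  · simp [Nat.factorization_eq_zero_of_not_prime _ hq]

theorem eq_one_of_factorization_lt_of_natCast_eq_zero {p m : ℕ} (hm : m ≠ 0)
    (hlt : ∀ q, m.factorization q < p) (h0 : ∀ q, (m.factorization q : ZMod p) = 0) : m = 1 :=
  ((Nat.factorization_eq_zero_iff' m).1 <| Finsupp.ext fun q =>
    Nat.eq_zero_of_dvd_of_lt ((ZMod.natCast_eq_zero_iff _ _).1 (h0 q)) (hlt q)).resolve_left hm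

theorem rat_pow_ne_natCast {p m : ℕ} (hm : 1 < m) (hlt : ∀ q, m.factorization q < p) (b : ℚ) :
    b ^ p ≠ m := fun hb =>
  hm.ne' <| eq_one_of_factorization_lt_of_natCast_eq_zero (by omega) hlt fun q => by
    simpa using natCast_factorization_eq_mul_of_cast_eq_pow_mul (p := p) (M := 1) (M' := m) (j := 0)
      (r := b) one_ne_zero (by omega) (by simp [hb]) q

theorem forall_not_pow_dvd_iff_factorization_lt {p m : ℕ} (hp : p ≠ 0) (hm : m ≠ 0) :
    (∀ q, q.Prime → ¬ q ^ p ∣ m) ↔ ∀ q, m.factorization q < p := by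
  refine forall_congr' fun q => ?_
  by_cases hq : q.Prime
  · simp [hq, hq.pow_dvd_iff_le_factorization hm]
  · simp [hq, Nat.factorization_eq_zero_of_not_prime _ hq, Nat.pos_of_ne_zero hp]

def exponentLayer (m i : ℕ) : ℕ :=
  ∏ q ∈ m.primeFactors with m.factorization q = i, q

section exponentLayer

variable {m i : ℕ}

theorem primeFactors_exponentLayer :
    (exponentLayer m i).primeFactors = {q ∈ m.primeFactors | m.factorization q = i} :=
  Nat.primeFactors_prod fun _ hq => Nat.prime_of_mem_primeFactors (mem_filter.1 hq).1

theorem exponentLayer_ne_zero : exponentLayer m i ≠ 0 :=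
  prod_ne_zero_iff.2 fun _ hq => (Nat.prime_of_mem_primeFactors (mem_filter.1 hq).1).ne_zero

theorem squarefree_exponentLayer : Squarefree (exponentLayer m i) := by
  have prime {q} (hq : q ∈ {q ∈ m.primeFactors | m.factorization q = i}) : q.Prime :=
    Nat.prime_of_mem_primeFactors (mem_filter.1 hq).1
  refine squarefree_prod_of_pairwise_isCoprime (fun q hq r hr hqr => ?_) fun q hq =>
    (prime hq).prime.squarefree
  exact Nat.coprime_iff_isRelPrime.1 ((Nat.coprime_primes (prime hq) (prime hr)).2 hqr)

theorem coprime_exponentLayer {j : ℕ} (hij : i ≠ j) :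
    (exponentLayer m i).Coprime (exponentLayer m j) := by
  rw [← Nat.disjoint_primeFactors exponentLayer_ne_zero exponentLayer_ne_zero,
    primeFactors_exponentLayer, primeFactors_exponentLayer]
  exact disjoint_filter.2 fun q _ hi hj => hij (hi ▸ hj)

theorem exponentLayer_congr {m' i' : ℕ} (hi : i ≠ 0) (hi' : i' ≠ 0)
    (h : ∀ q, m.factorization q = i ↔ m'.factorization q = i') :
    exponentLayer m i = exponentLayer m' i' := by
  have key {n k : ℕ} (hk : k ≠ 0) (q : ℕ) :
      q ∈ n.primeFactors ∧ n.factorization q = k ↔ n.factorization q = k := by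
    rw [← Nat.support_factorization, Finsupp.mem_support_iff]
    exact ⟨And.right, fun h => ⟨h ▸ hk, h⟩⟩
  unfold exponentLayer
  congr 1
  ext q
  rw [mem_filter, mem_filter, key hi, key hi', h]

theorem prod_exponentLayer_pow {p : ℕ} (hm : m ≠ 0) (hlt : ∀ q, m.factorization q < p) :
    ∏ i ∈ Icc 1 (p - 1), exponentLayer m i ^ i = m := by
  have hmaps : ∀ q ∈ m.primeFactors, m.factorization q ∈ Icc 1 (p - 1) := fun q hq => by
    have := (Nat.prime_of_mem_primeFactors hq).factorization_pos_of_dvd hm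
      (Nat.dvd_of_mem_primeFactors hq)
    have := hlt q
    rw [mem_Icc]; omega
  calc ∏ i ∈ Icc 1 (p - 1), exponentLayer m i ^ i
      = ∏ i ∈ Icc 1 (p - 1), ∏ q ∈ m.primeFactors with m.factorization q = i,
          q ^ m.factorization q := by
        refine prod_congr rfl fun i _ => ?_
        rw [exponentLayer, ← prod_pow]
        exact prod_congr rfl fun q hq => by rw [(mem_filter.1 hq).2]
    _ = ∏ q ∈ m.primeFactors, q ^ m.factorization q := prod_fiberwise_of_maps_to hmaps _
    _ = m := Nat.prod_factorization_pow_eq_self hm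

theorem stronglyCarefree_exponentLayer (p m : ℕ) : StronglyCarefree p (exponentLayer m) :=
  ⟨fun _ _ => ⟨Nat.pos_of_ne_zero exponentLayer_ne_zero, squarefree_exponentLayer⟩,
    fun _ _ _ _ hij => coprime_exponentLayer hij⟩

end exponentLayer

theorem Nat.Prime.exists_mem_dvd_of_dvd_prod_pow {q : ℕ} (hq : q.Prime) {s : Finset ℕ}
    {a : ℕ → ℕ} (hdvd : q ∣ ∏ j ∈ s, a j ^ j) : ∃ i ∈ s, q ∣ a i := by
  obtain ⟨i, hi, hqi⟩ := hq.prime.exists_mem_finset_dvd hdvd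
  exact ⟨i, hi, hq.dvd_of_dvd_pow hqi⟩

namespace StronglyCarefree

variable {p : ℕ} {a : ℕ → ℕ}

theorem prod_ne_zero (ha : StronglyCarefree p a) : ∏ i ∈ Icc 1 (p - 1), a i ^ i ≠ 0 :=
  prod_ne_zero_iff.2 fun i hi => pow_ne_zero i (ha.1 i hi).1.ne'

theorem factorization_prod_of_dvd (ha : StronglyCarefree p a) {i q : ℕ} (hi : i ∈ Icc 1 (p - 1))
    (hq : q.Prime) (hqa : q ∣ a i) : (∏ j ∈ Icc 1 (p - 1), a j ^ j).factorization q = i := by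
  have hrest : ¬ q ∣ ∏ j ∈ (Icc 1 (p - 1)).erase i, a j ^ j := fun hdvd => by
    obtain ⟨j, hj, hqj⟩ := hq.prime.exists_mem_finset_dvd hdvd
    obtain ⟨hji, hj⟩ := mem_erase.1 hj
    exact Nat.Prime.not_coprime_iff_dvd.2 ⟨q, hq, hq.dvd_of_dvd_pow hqj, hqa⟩ (ha.2 j hj i hi hji)
  rw [← mul_prod_erase _ _ hi, Nat.factorization_mul (pow_ne_zero i (ha.1 i hi).1.ne')
    (prod_ne_zero_iff.2 fun j hj => pow_ne_zero j (ha.1 j (mem_of_mem_erase hj)).1.ne'),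
    Finsupp.add_apply, Nat.factorization_pow, Finsupp.smul_apply,
    Nat.factorization_eq_one_of_squarefree (ha.1 i hi).2 hq hqa,
    Nat.factorization_eq_zero_of_not_dvd hrest, smul_eq_mul, mul_one, add_zero]

theorem factorization_prod_lt (ha : StronglyCarefree p a) (hp : p ≠ 0) (q : ℕ) :
    (∏ j ∈ Icc 1 (p - 1), a j ^ j).factorization q < p := by
  by_cases hq : q.Prime
  · by_cases hdvd : q ∣ ∏ j ∈ Icc 1 (p - 1), a j ^ j
    · obtain ⟨i, hi, hqi⟩ := hq.exists_mem_dvd_of_dvd_prod_pow hdvd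
      exact ha.factorization_prod_of_dvd hi hq hqi ▸ lt_of_mem_Icc_sub_one hi
    · simp [Nat.factorization_eq_zero_of_not_dvd hdvd, Nat.pos_of_ne_zero hp]
  · simp [Nat.factorization_eq_zero_of_not_prime _ hq, Nat.pos_of_ne_zero hp]

theorem eq_exponentLayer (ha : StronglyCarefree p a) {i : ℕ} (hi : i ∈ Icc 1 (p - 1)) :
    a i = exponentLayer (∏ j ∈ Icc 1 (p - 1), a j ^ j) i := by
  rw [← Nat.prod_primeFactors_of_squarefree (ha.1 i hi).2, exponentLayer]
  congr 1
  ext q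
  simp only [mem_filter, Nat.mem_primeFactors]
  constructor
  · rintro ⟨hq, hqa, -⟩
    refine ⟨⟨hq, hqa.trans ?_, ha.prod_ne_zero⟩, ha.factorization_prod_of_dvd hi hq hqa⟩
    exact (dvd_pow_self _ (Nat.one_le_iff_ne_zero.1 (mem_Icc.1 hi).1)).trans
      (dvd_prod_of_mem _ hi)
  · rintro ⟨⟨hq, hdvd, -⟩, hv⟩
    obtain ⟨j, hj, hqj⟩ := hq.exists_mem_dvd_of_dvd_prod_pow hdvd
    obtain rfl : j = i := hv ▸ (ha.factorization_prod_of_dvd hj hq hqj).symm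
    exact ⟨hq, hqj, (ha.1 j hj).1.ne'⟩

end StronglyCarefree

theorem AlgHom.mem_bot_of_apply_eq {F A B : Type*} [Field F] [Ring A] [IsDomain A] [Algebra F A]
    [Semiring B] [Algebra F B] (hA : (finrank F A).Prime) {σ ι : A →ₐ[F] B} (hne : σ ≠ ι)
    {x : A} (hx : σ x = ι x) : x ∈ (⊥ : Subalgebra F A) := by
  have := Subalgebra.isSimpleOrder_of_finrank_prime F A hA
  rcases eq_bot_or_eq_top (AlgHom.equalizer σ ι) with h | h
  · exact h ▸ hx
  · exact absurd (AlgHom.ext fun y => (h ▸ Algebra.mem_top : y ∈ AlgHom.equalizer σ ι)) hne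

section Kummer

variable {p : ℕ} {a : ℚ} {α : ℝ}

theorem isIntegral_of_pow_eq (hp : p ≠ 0) (hα : α ^ p = a) : IsIntegral ℚ α :=
  ⟨X ^ p - C a, monic_X_pow_sub_C a hp, by simp [hα]⟩

theorem minpoly_eq_X_pow_sub_C_of_pow_eq (hp : p.Prime) (ha : ∀ c : ℚ, c ^ p ≠ a)
    (hα : α ^ p = a) : minpoly ℚ α = X ^ p - C a :=
  (minpoly.eq_of_irreducible_of_monic (X_pow_sub_C_irreducible_of_prime hp ha) (by simp [hα])
    (monic_X_pow_sub_C a hp.ne_zero)).symm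

theorem finrank_adjoin_of_pow_eq (hp : p.Prime) (ha : ∀ c : ℚ, c ^ p ≠ a) (hα : α ^ p = a) :
    finrank ℚ ℚ⟮α⟯ = p := by
  rw [adjoin.finrank (isIntegral_of_pow_eq hp.ne_zero hα),
    minpoly_eq_X_pow_sub_C_of_pow_eq hp ha hα, natDegree_X_pow_sub_C]

theorem exists_algHom_adjoin_apply_gen_eq_mul (hp : p.Prime) (ha : ∀ c : ℚ, c ^ p ≠ a)
    (hα : α ^ p = a) {ζ : ℂ} (hζ : ζ ^ p = 1) :
    ∃ σ : ℚ⟮α⟯ →ₐ[ℚ] ℂ, σ (AdjoinSimple.gen ℚ α) = ζ * α := by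
  have hroot : ζ * α ∈ (minpoly ℚ α).aroots ℂ := by
    rw [mem_aroots, minpoly_eq_X_pow_sub_C_of_pow_eq hp ha hα]
    refine ⟨X_pow_sub_C_ne_zero hp.pos a, ?_⟩
    simp [mul_pow, hζ, ← Complex.ofReal_pow, hα]
  exact ⟨_, algHomAdjoinIntegralEquiv_symm_apply_gen ℚ (isIntegral_of_pow_eq hp.ne_zero hα)
    ⟨_, hroot⟩⟩

theorem exists_eq_rat_mul_pow_of_mem_adjoin_s12 (hp : p.Prime) (ha : ∀ c : ℚ, c ^ p ≠ a)
    (hα : α ^ p = a) {b : ℚ} {β : ℝ} (hβ : β ^ p = b) (hmem : β ∈ ℚ⟮α⟯) :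
    ∃ (j : ℕ) (r : ℚ), β = r * α ^ j := by
  obtain rfl | hβ0 := eq_or_ne β 0
  · exact ⟨0, 0, by simp⟩
  have hα0 : α ≠ 0 := by
    rintro rfl
    exact ha 0 (by exact_mod_cast hα)
  obtain ⟨ζ, hζ⟩ : ∃ ζ : ℂ, IsPrimitiveRoot ζ p := ⟨_, Complex.isPrimitiveRoot_exp p hp.ne_zero⟩
  obtain ⟨σ, hσ⟩ := exists_algHom_adjoin_apply_gen_eq_mul hp ha hα hζ.pow_eq_one
  let ι : ℚ⟮α⟯ →ₐ[ℚ] ℂ := (Complex.ofRealAm.restrictScalars ℚ).comp (val ℚ⟮α⟯)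
  have hne : σ ≠ ι := fun h => by
    have := congrArg (· (AdjoinSimple.gen ℚ α)) h
    simp only [hσ] at this
    exact hζ.ne_one hp.one_lt (mul_eq_right₀ (by exact_mod_cast hα0) |>.1 this)
  set x : ℚ⟮α⟯ := ⟨β, hmem⟩
  have hσx : σ x ^ p = (β : ℂ) ^ p := by
    have : x ^ p = (b : ℚ⟮α⟯) := Subtype.ext (by simp [x, hβ])
    rw [← map_pow, this, map_ratCast]
    simp [← Complex.ofReal_pow, hβ]
  have : NeZero p := ⟨hp.ne_zero⟩
  obtain ⟨k, hk, hζk⟩ := hζ.eq_pow_of_pow_eq_one (ξ := σ x / β) (by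
    rw [div_pow, hσx, div_self (pow_ne_zero _ (by exact_mod_cast hβ0))])
  -- As `ζ ^ p = 1`, `β α^(p-k)` is fixed by `σ` as well as by `ι`; in a field of prime degree
  -- this forces it to be rational.
  have hfix : σ (x * AdjoinSimple.gen ℚ α ^ (p - k)) =
      ι (x * AdjoinSimple.gen ℚ α ^ (p - k)) := by
    have hσx' : σ x = ζ ^ k * β := by rw [hζk, div_mul_cancel₀ _ (by exact_mod_cast hβ0)]
    calc σ (x * AdjoinSimple.gen ℚ α ^ (p - k))
        = ζ ^ (k + (p - k)) * (β * α ^ (p - k)) := by rw [map_mul, map_pow, hσ, hσx']; ring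
      _ = ι (x * AdjoinSimple.gen ℚ α ^ (p - k)) := by
        rw [Nat.add_sub_cancel' hk.le, hζ.pow_eq_one, one_mul, map_mul, map_pow]; rfl
  obtain ⟨s, hs⟩ :=
    AlgHom.mem_bot_of_apply_eq (by rwa [finrank_adjoin_of_pow_eq hp ha hα]) hne hfix
  have hs' : (s : ℝ) = β * α ^ (p - k) := congrArg Subtype.val hs
  refine ⟨k, s / a, ?_⟩
  rw [Rat.cast_div, hs', ← hα, div_mul_eq_mul_div, eq_div_iff (pow_ne_zero _ hα0), mul_assoc,
    ← pow_add, Nat.sub_add_cancel hk.le]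

end Kummer

theorem natCast_rpow_inv_mem_adjoin_of_mul_pow_eq_pow {p M M' t j : ℕ} (hp : p ≠ 0)
    (hM : M ≠ 0) (h : M' * t ^ p = M ^ j) : (M' : ℝ) ^ (p : ℝ)⁻¹ ∈ ℚ⟮(M : ℝ) ^ (p : ℝ)⁻¹⟯ := by
  have ht : (t : ℝ) ≠ 0 := by
    rintro ht
    rw [Nat.cast_eq_zero.1 ht, zero_pow hp, mul_zero, eq_comm, pow_eq_zero_iff'] at h
    exact hM h.1
  have hroot : (M' : ℝ) ^ (p : ℝ)⁻¹ = ((M : ℝ) ^ (p : ℝ)⁻¹) ^ j / t := by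
    rw [← pow_left_inj₀ (by positivity) (by positivity) hp, div_pow, ← pow_mul, mul_comm, pow_mul,
      Real.rpow_inv_natCast_pow (Nat.cast_nonneg _) hp,
      Real.rpow_inv_natCast_pow (Nat.cast_nonneg _) hp, eq_div_iff (pow_ne_zero _ ht)]
    exact_mod_cast h
  rw [hroot]
  exact div_mem (pow_mem (mem_adjoin_simple_self ℚ _) j) (IntermediateField.natCast_mem _ t)

theorem pureField_le_of_sameOrbit {p : ℕ} (hp : p.Prime) {a a' : ℕ → ℕ}
    (hM : ∏ i ∈ Icc 1 (p - 1), a i ^ i ≠ 0) (h : SameOrbit p a a') :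
    pureField p a' ≤ pureField p a := by
  obtain ⟨K, t, hKt⟩ := h.exists_prod_mul_pow_eq_pow hp
  exact adjoin_simple_le_iff.2 (natCast_rpow_inv_mem_adjoin_of_mul_pow_eq_pow hp.ne_zero hM hKt)

theorem sameOrbit_of_natCast_factorization_eq {p : ℕ} (hp : p.Prime) {a a' : ℕ → ℕ}
    (ha : StronglyCarefree p a) (ha' : StronglyCarefree p a') {c : ZMod p} (hc : c ≠ 0)
    (hv : ∀ q, ((∏ i ∈ Icc 1 (p - 1), a' i ^ i).factorization q : ZMod p) =
      c * (∏ i ∈ Icc 1 (p - 1), a i ^ i).factorization q) :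
    SameOrbit p a a' := by
  have : Fact p.Prime := ⟨hp⟩
  have hk : c⁻¹.val.Coprime p := Nat.coprime_comm.1 <| (Nat.Prime.coprime_iff_not_dvd hp).2
    fun hdvd => inv_ne_zero hc <| by
      rw [← ZMod.natCast_zmod_val c⁻¹, (ZMod.natCast_eq_zero_iff _ _).2 hdvd]
  refine ⟨c⁻¹.val, hk, fun i hi => ?_⟩
  have hki := mul_mod_mem_Icc hp hk hi
  rw [ha'.eq_exponentLayer hi, ha.eq_exponentLayer hki]
  refine exponentLayer_congr (by have := mem_Icc.1 hi; omega) (by have := mem_Icc.1 hki; omega)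
    fun q => ?_
  rw [← ZMod.natCast_inj_of_lt (ha'.factorization_prod_lt hp.ne_zero q)
      (lt_of_mem_Icc_sub_one hi),
    ← ZMod.natCast_inj_of_lt (ha.factorization_prod_lt hp.ne_zero q) (lt_of_mem_Icc_sub_one hki),
    ZMod.natCast_mod, Nat.cast_mul, ZMod.natCast_zmod_val, hv q, eq_inv_mul_iff_mul_eq₀ hc]

theorem sameOrbit_of_pureField_le {p : ℕ} (hp : p.Prime) {a a' : ℕ → ℕ}
    (ha : StronglyCarefree p a) (ha' : StronglyCarefree p a')
    (hM : 1 < ∏ i ∈ Icc 1 (p - 1), a i ^ i) (hM' : 1 < ∏ i ∈ Icc 1 (p - 1), a' i ^ i)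
    (h : pureField p a' ≤ pureField p a) : SameOrbit p a a' := by
  set M := ∏ i ∈ Icc 1 (p - 1), a i ^ i
  set M' := ∏ i ∈ Icc 1 (p - 1), a' i ^ i
  have hroot (n : ℕ) : ((n : ℝ) ^ (p : ℝ)⁻¹) ^ p = ((n : ℚ) : ℝ) := by
    rw [Real.rpow_inv_natCast_pow (Nat.cast_nonneg n) hp.ne_zero, Rat.cast_natCast]
  obtain ⟨j, r, hβ⟩ := exists_eq_rat_mul_pow_of_mem_adjoin_s12 hp
    (rat_pow_ne_natCast hM (ha.factorization_prod_lt hp.ne_zero)) (hroot M) (hroot M')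
    (adjoin_simple_le_iff.1 h)
  have hrel : (M' : ℚ) = r ^ p * M ^ j := by
    have : ((M' : ℚ) : ℝ) = ((r ^ p * M ^ j : ℚ) : ℝ) := by
      rw [← hroot M', hβ, mul_pow, ← pow_mul, mul_comm j p, pow_mul, hroot M]
      push_cast; ring
    exact_mod_cast this
  have hv := natCast_factorization_eq_mul_of_cast_eq_pow_mul (by omega) (by omega) hrel
  refine sameOrbit_of_natCast_factorization_eq hp ha ha' (fun hj => hM'.ne' ?_) hv
  exact eq_one_of_factorization_lt_of_natCast_eq_zero (by omega)
    (ha'.factorization_prod_lt hp.ne_zero) fun q => by rw [hv q, hj, zero_mul]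

theorem pure_prime_degree_fields_parametrized_general
    (p : ℕ) (hp : p.Prime) :
    (∀ a : ℕ → ℕ, StronglyCarefree p a → 1 < ∏ i ∈ Finset.Icc 1 (p - 1), a i ^ i →
      IsPureField p (pureField p a)) ∧
    (∀ K : IntermediateField ℚ ℝ, IsPureField p K →
      ∃ a : ℕ → ℕ, StronglyCarefree p a ∧ 1 < ∏ i ∈ Finset.Icc 1 (p - 1), a i ^ i ∧
        pureField p a = K) ∧
    (∀ a a' : ℕ → ℕ,
      StronglyCarefree p a → 1 < ∏ i ∈ Finset.Icc 1 (p - 1), a i ^ i →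
      StronglyCarefree p a' → 1 < ∏ i ∈ Finset.Icc 1 (p - 1), a' i ^ i →
        (pureField p a = pureField p a' ↔ SameOrbit p a a')) := by
  refine ⟨fun a ha hM => ⟨_, hM, ?_, rfl⟩, ?_, fun a a' ha hM ha' hM' => ⟨?_, ?_⟩⟩
  · exact (forall_not_pow_dvd_iff_factorization_lt hp.ne_zero ha.prod_ne_zero).2
      (ha.factorization_prod_lt hp.ne_zero)
  · rintro K ⟨m, hm, hfree, rfl⟩
    have hprod := prod_exponentLayer_pow (by omega)
      ((forall_not_pow_dvd_iff_factorization_lt hp.ne_zero (by omega)).1 hfree)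
    refine ⟨exponentLayer m, stronglyCarefree_exponentLayer p m, by rwa [hprod], ?_⟩
    rw [pureField, hprod]
  · exact fun h => sameOrbit_of_pureField_le hp ha ha' hM hM' h.ge
  · exact fun h => le_antisymm (pureField_le_of_sameOrbit hp (by omega) (h.symm hp))
      (pureField_le_of_sameOrbit hp (by omega) h)

/-- The map sending a strongly carefree tuple `(a 1, …, a (p−1))` (with `∏ a i ^ i > 1`) to
the field `ℚ((∏ a i ^ i)^(1/p)) ⊆ ℝ` descends to a bijection between orbits of the
`(ℤ/pℤ)ˣ`-action permuting indices and isomorphism classes of pure prime degree `p`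
fields: it lands in the pure fields, hits every pure field, and identifies two tuples
exactly when they lie in the same orbit. -/
theorem pure_prime_degree_fields_parametrized
    (p : ℕ) (hp : p.Prime) (hodd : Odd p) :
    (∀ a : ℕ → ℕ, StronglyCarefree p a → 1 < ∏ i ∈ Finset.Icc 1 (p - 1), a i ^ i →
      IsPureField p (pureField p a)) ∧
    (∀ K : IntermediateField ℚ ℝ, IsPureField p K →
      ∃ a : ℕ → ℕ, StronglyCarefree p a ∧ 1 < ∏ i ∈ Finset.Icc 1 (p - 1), a i ^ i ∧
        pureField p a = K) ∧
    (∀ a a' : ℕ → ℕ,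
      StronglyCarefree p a → 1 < ∏ i ∈ Finset.Icc 1 (p - 1), a i ^ i →
      StronglyCarefree p a' → 1 < ∏ i ∈ Finset.Icc 1 (p - 1), a' i ^ i →
        (pureField p a = pureField p a' ↔ SameOrbit p a a')) :=
  pure_prime_degree_fields_parametrized_general p hp
end

section
/- Let p be an odd prime and ℓ = (p−1)/2. Let C_p be the (p−1)×(p−1) integer matrix defined by: (C_p)_{i,j} = 2·((ij) mod p) − p for 1 ≤ i ≤ ℓ and 1 ≤ j ≤ p−1, where (ij) mod p denotes the least positive residue of ij modulo p; (C_p)_{i,j} = 1 if ℓ+1 ≤ i ≤ p−2 and j ∈ {i−ℓ, p−(i−ℓ)}, and 0 for other entries in rows ℓ+1,…,p−2; and (C_p)_{p−1,j} = 1 − ∑_{i=1}^{p−2} (C_p)_{i,j}, so that every column of C_p sums to 1. Then |det(C_p)| = 2^ℓ · |det(M_p)|, where M_p is the ℓ×ℓ integer matrix with entries (M_p)_{i,j} = 2·((ij) mod p) − p for 1 ≤ i, j ≤ ℓ. -/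
open Finset

/-- The entries of the first `p−2` rows (1-indexed) of the change-of-variables matrix `C_p`:
for `1 ≤ i ≤ ℓ = (p−1)/2` the entry is `2·((i·j) mod p) − p`, and for `ℓ+1 ≤ i ≤ p−2`
the entry is `1` if `j ∈ {i−ℓ, p−(i−ℓ)}` and `0` otherwise. -/
def cTopEntry (p i j : ℕ) : ℤ :=
  if i ≤ (p - 1) / 2 then 2 * ((i * j) % p : ℕ) - p
  else if j = i - (p - 1) / 2 ∨ j = p - (i - (p - 1) / 2) then 1 else 0

/-- The `(p−1) × (p−1)` integer matrix `C_p`: its first `p−2` rows are given by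
`cTopEntry`, and its last row is chosen so that every column sums to `1`. -/
def cMatrix (p : ℕ) : Matrix (Fin (p - 1)) (Fin (p - 1)) ℤ := fun i j =>
  if (i : ℕ) + 1 ≤ p - 2 then cTopEntry p ((i : ℕ) + 1) ((j : ℕ) + 1)
  else 1 - ∑ i' ∈ Finset.Icc 1 (p - 2), cTopEntry p i' ((j : ℕ) + 1)

/-- The `ℓ × ℓ` integer matrix `M_p` with entries `2·((i·j) mod p) − p` (1-indexed). -/
def mMatrix (p : ℕ) : Matrix (Fin ((p - 1) / 2)) (Fin ((p - 1) / 2)) ℤ := fun i j =>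
  2 * ((((i : ℕ) + 1) * ((j : ℕ) + 1)) % p : ℕ) - p

/-!
Add column `p − m` of `C_p` to column `m` for every `m ≤ ℓ`; this is a unimodular column
operation. Since `ij` and `i(p − j)` are complementary residues mod `p`, the two columns cancel
in the first `ℓ` rows, while the middle row `ℓ + k` contributes `2` exactly in column `k` and,
because every column of `C_p` sums to `1`, the last row contributes `2` exactly in column `ℓ`.
The first `ℓ` columns of the new matrix are therefore `2 I` sitting below a zero block, and in
the first `ℓ` rows the remaining columns, read from right to left, form `−M_p`.
-/

theorem Nat.mod_add_mod_eq_of_dvd_add {n a b : ℕ} (h : n ∣ a + b) (ha : ¬ n ∣ a) :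
    a % n + b % n = n := by
  have hsum := Nat.mod_eq_zero_of_dvd h
  have ha' : a % n ≠ 0 := fun h0 => ha (Nat.dvd_of_mod_eq_zero h0)
  rw [Nat.add_mod_eq_ite] at hsum
  split_ifs at hsum <;> omega

theorem Nat.Prime.mul_mod_add_mul_sub_mod {p i j : ℕ} (hp : p.Prime) (hi : ¬ p ∣ i)
    (hj : 0 < j) (hjp : j < p) : i * j % p + i * (p - j) % p = p :=
  Nat.mod_add_mod_eq_of_dvd_add ⟨i, by rw [← mul_add, Nat.add_sub_cancel' hjp.le, mul_comm]⟩
    (hp.not_dvd_mul hi (Nat.not_dvd_of_pos_of_lt hj hjp))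

namespace Matrix

theorem abs_det_of_toBlocks₁₁_eq_zero {m R : Type*} [Fintype m] [DecidableEq m] [CommRing R]
    [LinearOrder R] [IsStrictOrderedRing R] (A : Matrix (m ⊕ m) (m ⊕ m) R)
    (h : A.toBlocks₁₁ = 0) : |A.det| = |A.toBlocks₁₂.det| * |A.toBlocks₂₁.det| := by
  have hswap : A = (fromBlocks A.toBlocks₁₂ 0 A.toBlocks₂₂ A.toBlocks₂₁).submatrix
      (Equiv.refl _) (Equiv.sumComm m m) := by
    conv_lhs => rw [← A.fromBlocks_toBlocks, h]
    ext (i | i) (j | j) <;> rfl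
  rw [hswap, abs_det_submatrix_equiv_equiv, det_fromBlocks_zero₁₂, abs_mul]
  simp

def addRevCol (R : Type*) [Semiring R] (n ℓ : ℕ) : Matrix (Fin n) (Fin n) R :=
  1 + of fun (k j : Fin n) => if (j : ℕ) < ℓ ∧ k = j.rev then 1 else 0

theorem mul_addRevCol_apply {R : Type*} [Semiring R] {m n : ℕ} (ℓ : ℕ)
    (A : Matrix (Fin m) (Fin n) R) (i : Fin m) (j : Fin n) :
    (A * addRevCol R n ℓ) i j = A i j + if (j : ℕ) < ℓ then A i j.rev else 0 := by
  simp [addRevCol, mul_apply, ite_and, _root_.mul_add, sum_add_distrib, one_apply]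

theorem det_addRevCol {R : Type*} [CommRing R] {n ℓ : ℕ} (h : 2 * ℓ ≤ n) :
    (addRevCol R n ℓ).det = 1 := by
  have hrev : ∀ j : Fin n, (j : ℕ) < ℓ → j < j.rev := fun j hj => by
    rw [Fin.lt_def, Fin.val_rev]; omega
  rw [det_of_isLowerTriangular]
  · refine prod_eq_one fun j _ => ?_
    by_cases hj : (j : ℕ) < ℓ
    · simp [addRevCol, hj, (hrev j hj).ne]
    · simp [addRevCol, hj]
  · intro k j hkj
    rw [OrderDual.toDual_lt_toDual] at hkj
    have hk : ¬ ((j : ℕ) < ℓ ∧ k = j.rev) := fun ⟨hj, hk⟩ => lt_asymm hkj (hk ▸ hrev j hj)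
    simp [addRevCol, one_apply_ne hkj.ne, hk]

end Matrix

def finHalvesEquiv {n : ℕ} (hn : Even n) : Fin (n / 2) ⊕ Fin (n / 2) ≃ Fin n :=
  finSumFinEquiv.trans (finCongr (by rw [← two_mul, Nat.two_mul_div_two_of_even hn]))

@[simp]
theorem finHalvesEquiv_inl_val {n : ℕ} (hn : Even n) (a : Fin (n / 2)) :
    (finHalvesEquiv hn (Sum.inl a) : ℕ) = a := rfl

@[simp]
theorem finHalvesEquiv_inr_val {n : ℕ} (hn : Even n) (b : Fin (n / 2)) :
    (finHalvesEquiv hn (Sum.inr b) : ℕ) = n / 2 + b := rfl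

section CMatrix

variable {p : ℕ}

theorem cTopEntry_add_cTopEntry_sub (hp : p.Prime) (hodd : Odd p) {i m : ℕ} (hi : 1 ≤ i)
    (hip : i ≤ p - 2) (hm : 1 ≤ m) (hmℓ : m ≤ (p - 1) / 2) :
    cTopEntry p i m + cTopEntry p i (p - m) = if i = (p - 1) / 2 + m then 2 else 0 := by
  have hP : p = 2 * ((p - 1) / 2) + 1 := by obtain ⟨k, hk⟩ := hodd; omega
  unfold cTopEntry
  by_cases hiℓ : i ≤ (p - 1) / 2
  · have hres := hp.mul_mod_add_mul_sub_mod (Nat.not_dvd_of_pos_of_lt hi (by omega))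
      (j := m) hm (by omega)
    rw [if_pos hiℓ, if_pos hiℓ, if_neg (by omega)]
    omega
  · simp only [if_neg hiℓ]
    split_ifs <;> omega

theorem cMatrix_add_cMatrix_rev (hp : p.Prime) (hodd : Odd p) (i j : Fin (p - 1))
    (hj : (j : ℕ) < (p - 1) / 2) :
    cMatrix p i j + cMatrix p i j.rev = if (i : ℕ) = (p - 1) / 2 + j then 2 else 0 := by
  have hP : p = 2 * ((p - 1) / 2) + 1 := by obtain ⟨k, hk⟩ := hodd; omega
  have hi := i.isLt
  have hrev : (j.rev : ℕ) + 1 = p - ((j : ℕ) + 1) := by rw [Fin.val_rev]; omega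
  unfold cMatrix
  rw [hrev]
  by_cases hiC : (i : ℕ) + 1 ≤ p - 2
  · rw [if_pos hiC, if_pos hiC,
      cTopEntry_add_cTopEntry_sub hp hodd (by omega) hiC (by omega) hj]
    split_ifs <;> omega
  · -- the last row: each column of `C_p` sums to `1`
    have hsum : ∑ i' ∈ Icc 1 (p - 2), cTopEntry p i' ((j : ℕ) + 1) +
        ∑ i' ∈ Icc 1 (p - 2), cTopEntry p i' (p - ((j : ℕ) + 1)) =
        if (p - 1) / 2 + ((j : ℕ) + 1) ∈ Icc 1 (p - 2) then 2 else 0 := by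
      rw [← sum_add_distrib, ← sum_ite_eq' _ _ fun _ => (2 : ℤ)]
      exact sum_congr rfl fun i' hi' => cTopEntry_add_cTopEntry_sub hp hodd
        (mem_Icc.1 hi').1 (mem_Icc.1 hi').2 (by omega) hj
    rw [if_neg hiC, if_neg hiC]
    simp only [mem_Icc] at hsum
    split_ifs at hsum ⊢ <;> omega

end CMatrix

section CBlock

open Matrix

/-- The columns `j ≥ ℓ` are taken right to left so that the top-right block is `−M_p` itself. -/
def cBlockMatrix (p : ℕ) (hodd : Odd p) :
    Matrix (Fin ((p - 1) / 2) ⊕ Fin ((p - 1) / 2))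
      (Fin ((p - 1) / 2) ⊕ Fin ((p - 1) / 2)) ℤ :=
  (cMatrix p * addRevCol ℤ (p - 1) ((p - 1) / 2)).submatrix
    (finHalvesEquiv (Nat.Odd.sub_odd hodd odd_one))
    ((Equiv.sumCongr (Equiv.refl _) Fin.revPerm).trans
      (finHalvesEquiv (Nat.Odd.sub_odd hodd odd_one)))

variable {p : ℕ}

theorem cBlockMatrix_toBlocks₁₁ (hp : p.Prime) (hodd : Odd p) :
    (cBlockMatrix p hodd).toBlocks₁₁ = 0 := by
  ext a b
  have hpair := cMatrix_add_cMatrix_rev hp hodd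
    (finHalvesEquiv (Nat.Odd.sub_odd hodd odd_one) (.inl a))
    (finHalvesEquiv (Nat.Odd.sub_odd hodd odd_one) (.inl b)) b.isLt
  simp only [cBlockMatrix, toBlocks₁₁, of_apply, submatrix_apply, Equiv.trans_apply,
    Equiv.sumCongr_apply, Sum.map_inl, Equiv.refl_apply, mul_addRevCol_apply,
    finHalvesEquiv_inl_val, b.isLt, if_true] at hpair ⊢
  rw [Matrix.zero_apply, hpair]
  exact if_neg (by omega)

theorem cBlockMatrix_toBlocks₂₁ (hp : p.Prime) (hodd : Odd p) :
    (cBlockMatrix p hodd).toBlocks₂₁ = (2 : ℤ) • 1 := by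
  ext a b
  have hpair := cMatrix_add_cMatrix_rev hp hodd
    (finHalvesEquiv (Nat.Odd.sub_odd hodd odd_one) (.inr a))
    (finHalvesEquiv (Nat.Odd.sub_odd hodd odd_one) (.inl b)) b.isLt
  simp only [cBlockMatrix, toBlocks₂₁, of_apply, submatrix_apply, Equiv.trans_apply,
    Equiv.sumCongr_apply, Sum.map_inl, Equiv.refl_apply, mul_addRevCol_apply,
    finHalvesEquiv_inl_val, finHalvesEquiv_inr_val, b.isLt, if_true] at hpair ⊢
  simp [hpair, one_apply, Fin.val_inj]

theorem cBlockMatrix_toBlocks₁₂ (hp : p.Prime) (hodd : Odd p) :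
    (cBlockMatrix p hodd).toBlocks₁₂ = -mMatrix p := by
  ext a b
  have hP : p = 2 * ((p - 1) / 2) + 1 := by obtain ⟨k, hk⟩ := hodd; omega
  set i := finHalvesEquiv (Nat.Odd.sub_odd hodd odd_one) (.inl a) with hi
  set j : Fin (p - 1) := ⟨b, by omega⟩
  have hcol : finHalvesEquiv (Nat.Odd.sub_odd hodd odd_one) (.inr (Fin.revPerm b)) = j.rev :=
    Fin.ext (by simp [j]; omega)
  have hpair := cMatrix_add_cMatrix_rev hp hodd i j b.isLt
  have hright : ¬ (j.rev : ℕ) < (p - 1) / 2 := by simp [j]; omega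
  have hdiag : ¬ (i : ℕ) = (p - 1) / 2 + j := by simp [i, j]; omega
  have htop : cMatrix p i j = mMatrix p a b := by
    have ha : (a : ℕ) + 1 ≤ (p - 1) / 2 := a.isLt
    simp [i, j, cMatrix, cTopEntry, mMatrix, ha, show (a : ℕ) + 1 ≤ p - 2 by omega]
  simp only [cBlockMatrix, toBlocks₁₂, of_apply, submatrix_apply, Equiv.trans_apply,
    Equiv.sumCongr_apply, Sum.map_inr, mul_addRevCol_apply, ← hi, hcol, hright, if_false,
    add_zero, Matrix.neg_apply]
  simp only [hdiag, if_false] at hpair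
  linarith

end CBlock

/-- `|det C_p| = 2^ℓ · |det M_p|` for `p` an odd prime and `ℓ = (p−1)/2`. -/
theorem det_cMatrix_eq_pow_two_mul_det_mMatrix
    (p : ℕ) (hp : p.Prime) (hodd : Odd p) :
    |(cMatrix p).det| = 2 ^ ((p - 1) / 2) * |(mMatrix p).det| := by
  have hℓ : 2 * ((p - 1) / 2) ≤ p - 1 := Nat.mul_div_le (p - 1) 2
  calc |(cMatrix p).det|
      = |(cMatrix p * Matrix.addRevCol ℤ (p - 1) ((p - 1) / 2)).det| := by
        rw [Matrix.det_mul, Matrix.det_addRevCol hℓ, mul_one]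
    _ = |(cBlockMatrix p hodd).det| := (Matrix.abs_det_submatrix_equiv_equiv _ _ _).symm
    _ = |(-mMatrix p).det| *
          |((2 : ℤ) • (1 : Matrix (Fin ((p - 1) / 2)) (Fin ((p - 1) / 2)) ℤ)).det| := by
        rw [Matrix.abs_det_of_toBlocks₁₁_eq_zero _ (cBlockMatrix_toBlocks₁₁ hp hodd),
          cBlockMatrix_toBlocks₁₂ hp hodd, cBlockMatrix_toBlocks₂₁ hp hodd]
    _ = 2 ^ ((p - 1) / 2) * |(mMatrix p).det| := by
        rw [Matrix.det_neg, Matrix.det_smul, Matrix.det_one, Fintype.card_fin]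
        simp [abs_mul, mul_comm]
end

section
/- Let p be an odd prime and ℓ = (p−1)/2. Let M_p be the ℓ×ℓ integer matrix with entries (M_p)_{i,j} = 2·((ij) mod p) − p for 1 ≤ i, j ≤ ℓ, and let D_p be the ℓ×ℓ integer matrix (Maillet's matrix) with entries (D_p)_{i,j} = (i·j*) mod p for 1 ≤ i, j ≤ ℓ, where j* denotes the multiplicative inverse of j modulo p and (x mod p) denotes the least positive residue in {1,…,p−1}. Then |det(M_p)| = 2^{ℓ−1} · |det(D_p)|. -/
/-!
The residues `1, …, ℓ` form a half system modulo `p`: every unit of `ZMod p` is `±s` for exactly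
one `s` among them. Choosing, for each column `j`, the `s = σ j` with `s⁻¹ = ±j` turns column `j`
of `M_p` into `±(2 D_{·,σ j} − p)`, and `σ` is a permutation. Since `1* = 1` and `ℓ* = −2`, the
first and last columns of `D_p` satisfy `2 D_{r,1} + D_{r,ℓ} = p`, so `2 D_p − p` is `D_p` times
`2 − w 1ᵀ` with `w = 2 e₁ + e_ℓ`, a rank-one perturbation of `2` whose determinant
`2^ℓ − 3 · 2^(ℓ−1) = −2^(ℓ−1)` comes from the characteristic polynomial of `w 1ᵀ`.
-/

open Finset

/-- Maillet's matrix `D_p`, with entries the least positive residue of `i·j*` modulo `p`,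
where `j*` is the inverse of `j` modulo `p` (all 1-indexed). -/
def mailletMatrix (p : ℕ) : Matrix (Fin ((p - 1) / 2)) (Fin ((p - 1) / 2)) ℤ := fun i j =>
  ((((i : ℕ) + 1) * ((((j : ℕ) + 1 : ℕ) : ZMod p)⁻¹.val) % p : ℕ) : ℤ)

open Matrix

theorem Matrix.det_scalar_sub_vecMulVec {R n : Type*} [CommRing R] [Fintype n] [DecidableEq n]
    (c : R) (u v : n → R) :
    (scalar n c - vecMulVec u v).det =
      c ^ Fintype.card n - (u ⬝ᵥ v) * c ^ (Fintype.card n - 1) := by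
  rw [← eval_charpoly, charpoly_vecMulVec]
  simp

theorem Matrix.mul_scalar_sub_vecMulVec {R m n : Type*} [CommRing R] [Fintype n] [DecidableEq n]
    {D : Matrix m n R} {w : n → R} {c : R} (hD : D *ᵥ w = fun _ => c) (k : R) :
    D * (scalar n k - vecMulVec w 1) = of fun r s => k * D r s - c := by
  rw [Matrix.mul_sub, mul_vecMulVec, hD]
  ext r s
  simp [mul_comm]

theorem Matrix.abs_det_eq_of_eq_units_mul_submatrix {R n : Type*} [CommRing R] [LinearOrder R]
    [IsStrictOrderedRing R] [Fintype n] [DecidableEq n] {M N : Matrix n n R}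
    (σ : Equiv.Perm n) (ε : n → ℤˣ) (h : ∀ i j, M i j = ε j * N i (σ j)) :
    |M.det| = |N.det| := by
  have hM : M = N.submatrix (Equiv.refl n) σ * diagonal fun j => ((ε j : ℤ) : R) := by
    ext i j
    simp [h, mul_comm]
  rw [hM, det_mul, abs_mul, abs_det_submatrix_equiv_equiv, det_diagonal, Finset.abs_prod]
  simp [abs_unit_intCast]

theorem Matrix.det_scalar_two_sub_vecMulVec_single {n : Type*} [Fintype n] [DecidableEq n]
    [Nonempty n] (i j : n) :
    (scalar n (2 : ℤ) - vecMulVec (Pi.single i 2 + Pi.single j 1) 1).det =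
      -2 ^ (Fintype.card n - 1) := by
  obtain ⟨m, hm⟩ := Nat.exists_eq_add_one_of_ne_zero (Fintype.card_ne_zero (α := n))
  rw [det_scalar_sub_vecMulVec, show (Pi.single i 2 + Pi.single j 1 : n → ℤ) ⬝ᵥ 1 = 3 by
    simp [add_dotProduct], hm, Nat.add_sub_cancel]
  ring

theorem inv_eq_units_mul_of_inv_eq_units_mul {K : Type*} [DivisionRing K] {a b : K} {ε : ℤˣ}
    (h : a⁻¹ = ε * b) : b⁻¹ = ε * a := by
  rcases Int.units_eq_one_or ε with rfl | rfl
  · simp only [Units.val_one, Int.cast_one, one_mul] at h ⊢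
    rw [← h, inv_inv]
  · simp only [Units.val_neg, Units.val_one, Int.cast_neg, Int.cast_one, neg_mul, one_mul] at h ⊢
    rw [neg_eq_iff_eq_neg.mp h.symm, inv_neg, inv_inv]

def halfSystem (p : ℕ) (j : Fin ((p - 1) / 2)) : ZMod p := ((j : ℕ) + 1 : ℕ)

theorem mMatrix_apply (p : ℕ) (r j : Fin ((p - 1) / 2)) :
    mMatrix p r j = 2 * ((halfSystem p r * halfSystem p j).val : ℤ) - p := by
  rw [mMatrix, halfSystem, halfSystem, ← Nat.cast_mul, ZMod.val_natCast]

theorem val_halfSystem {p : ℕ} (j : Fin ((p - 1) / 2)) : (halfSystem p j).val = j + 1 :=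
  ZMod.val_cast_of_lt (by omega)

theorem halfSystem_ne_zero {p : ℕ} (j : Fin ((p - 1) / 2)) : halfSystem p j ≠ 0 := by
  intro h
  have := val_halfSystem j
  rw [h, ZMod.val_zero] at this
  omega

section HalfSystem

variable {p : ℕ} [NeZero p]

theorem mailletMatrix_apply (r s : Fin ((p - 1) / 2)) :
    mailletMatrix p r s = ((halfSystem p r * (halfSystem p s)⁻¹).val : ℤ) := by
  rw [mailletMatrix, halfSystem, halfSystem, ← ZMod.val_natCast, Nat.cast_mul,
    ZMod.natCast_zmod_val]

theorem eq_of_halfSystem_eq_units_mul {j k : Fin ((p - 1) / 2)} {ε : ℤˣ}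
    (h : halfSystem p j = ε * halfSystem p k) : j = k := by
  rcases Int.units_eq_one_or ε with rfl | rfl
  · have := congrArg ZMod.val h
    simp only [Units.val_one, Int.cast_one, one_mul, val_halfSystem] at this
    exact Fin.ext (by omega)
  · have := congrArg ZMod.val h
    simp only [Units.val_neg, Units.val_one, Int.cast_neg, Int.cast_one, neg_mul, one_mul,
      ZMod.neg_val, halfSystem_ne_zero, if_false, val_halfSystem] at this
    omega

theorem exists_eq_units_mul_halfSystem (hodd : Odd p) {a : ZMod p} (ha : a ≠ 0) :
    ∃ (s : Fin ((p - 1) / 2)) (ε : ℤˣ), a = ε * halfSystem p s := by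
  have hpos : 0 < a.val := (ZMod.val_pos).mpr ha
  have hlt : a.val < p := ZMod.val_lt a
  obtain ⟨k, hk⟩ := hodd
  by_cases hle : a.val ≤ (p - 1) / 2
  · refine ⟨⟨a.val - 1, by omega⟩, 1, ?_⟩
    rw [Units.val_one, Int.cast_one, one_mul, halfSystem, Nat.sub_add_cancel hpos,
      ZMod.natCast_zmod_val]
  · refine ⟨⟨p - a.val - 1, by omega⟩, -1, ?_⟩
    rw [Units.val_neg, Units.val_one, Int.cast_neg, Int.cast_one, neg_one_mul, halfSystem,
      Nat.sub_add_cancel (by omega), Nat.cast_sub hlt.le, ZMod.natCast_self,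
      ZMod.natCast_zmod_val, zero_sub, neg_neg]

theorem two_mul_val_units_mul_sub {a : ZMod p} (ha : a ≠ 0) (ε : ℤˣ) :
    2 * (((ε : ZMod p) * a).val : ℤ) - p = ε * (2 * (a.val : ℤ) - p) := by
  rcases Int.units_eq_one_or ε with rfl | rfl
  · simp
  · simp only [Units.val_neg, Units.val_one, Int.cast_neg, Int.cast_one, neg_mul, one_mul,
      ZMod.neg_val, ha, if_false, Nat.cast_sub (ZMod.val_lt a).le]
    ring

end HalfSystem

section Maillet

variable {p : ℕ} [Fact p.Prime]

theorem inv_halfSystem_last (hodd : Odd p) (hℓ : 0 < (p - 1) / 2) :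
    (halfSystem p ⟨(p - 1) / 2 - 1, by omega⟩)⁻¹ = -2 := by
  obtain ⟨k, hk⟩ := hodd
  have hp : ((2 * ((p - 1) / 2) + 1 : ℕ) : ZMod p) = 0 := by
    rw [show 2 * ((p - 1) / 2) + 1 = p by omega, ZMod.natCast_self]
  apply inv_eq_of_mul_eq_one_right
  rw [halfSystem, Nat.sub_add_cancel hℓ]
  push_cast at hp
  linear_combination -hp

theorem mailletMatrix_apply_last (hodd : Odd p) (hℓ : 0 < (p - 1) / 2) (r : Fin ((p - 1) / 2)) :
    mailletMatrix p r ⟨(p - 1) / 2 - 1, by omega⟩ = p - 2 * ((r : ℤ) + 1) := by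
  have hr : 2 * ((r : ℕ) + 1) < p := by obtain ⟨k, hk⟩ := hodd; omega
  have hentry : halfSystem p r * (halfSystem p ⟨(p - 1) / 2 - 1, by omega⟩)⁻¹
      = -((2 * ((r : ℕ) + 1) : ℕ) : ZMod p) := by
    rw [inv_halfSystem_last hodd hℓ, halfSystem]
    push_cast
    ring
  have hne : ((2 * ((r : ℕ) + 1) : ℕ) : ZMod p) ≠ 0 := by
    rw [Ne, ZMod.natCast_eq_zero_iff]
    exact Nat.not_dvd_of_pos_of_lt (by omega) hr
  rw [mailletMatrix_apply, hentry, ZMod.neg_val, if_neg hne, ZMod.val_cast_of_lt hr,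
    Nat.cast_sub hr.le]
  push_cast
  ring

theorem mailletMatrix_mulVec (hodd : Odd p) (hℓ : 0 < (p - 1) / 2) :
    mailletMatrix p *ᵥ (Pi.single ⟨0, hℓ⟩ 2 + Pi.single ⟨(p - 1) / 2 - 1, by omega⟩ 1) =
      fun _ => (p : ℤ) := by
  ext r
  have hfirst : mailletMatrix p r ⟨0, hℓ⟩ = (r : ℤ) + 1 := by
    rw [mailletMatrix_apply, show halfSystem p ⟨0, hℓ⟩ = 1 by simp [halfSystem], inv_one,
      mul_one, val_halfSystem]
    push_cast
    ring
  simp only [mulVec_add, mulVec_single, Pi.add_apply, Pi.smul_apply, col_apply,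
    MulOpposite.smul_eq_mul_unop, MulOpposite.unop_op, hfirst, mailletMatrix_apply_last hodd hℓ]
  ring

theorem exists_mMatrix_eq_units_mul_maillet (hodd : Odd p) :
    ∃ (σ : Equiv.Perm (Fin ((p - 1) / 2))) (ε : Fin ((p - 1) / 2) → ℤˣ),
      ∀ r j, mMatrix p r j = ε j * (2 * mailletMatrix p r (σ j) - p) := by
  choose σ ε hσ using fun j =>
    exists_eq_units_mul_halfSystem hodd (inv_ne_zero (halfSystem_ne_zero (p := p) j))
  have hinv j : (halfSystem p (σ j))⁻¹ = ε j * halfSystem p j :=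
    inv_eq_units_mul_of_inv_eq_units_mul (hσ j)
  have hinj : Function.Injective σ := by
    intro j k hjk
    refine eq_of_halfSystem_eq_units_mul (ε := ε j * ε k) ?_
    have h := (hinv j).symm.trans (hjk ▸ hinv k)
    have hsq : ((ε j : ℤ) : ZMod p) * (ε j : ℤ) = 1 := by
      rw [← Int.cast_mul, ← Units.val_mul, Int.units_mul_self, Units.val_one, Int.cast_one]
    push_cast
    linear_combination ((ε j : ℤ) : ZMod p) * h - halfSystem p j * hsq
  refine ⟨Equiv.ofBijective σ hinj.bijective_of_finite, ε, fun r j => ?_⟩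
  have hrj := mul_ne_zero (halfSystem_ne_zero r) (halfSystem_ne_zero j)
  rw [Equiv.ofBijective_apply, mailletMatrix_apply, hinv, mul_left_comm,
    two_mul_val_units_mul_sub hrj, mMatrix_apply, ← mul_assoc,
    ← Units.val_mul, Int.units_mul_self, Units.val_one, one_mul]

end Maillet

/-- `|det M_p| = 2^(ℓ−1) · |det D_p|` for `p` an odd prime, `ℓ = (p−1)/2`, where `D_p` is
Maillet's matrix. -/
theorem det_mMatrix_eq_pow_two_mul_maillet
    (p : ℕ) (hp : p.Prime) (hodd : Odd p) :
    |(mMatrix p).det| = 2 ^ ((p - 1) / 2 - 1) * |(mailletMatrix p).det| := by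
  have := Fact.mk hp
  have hℓ : 0 < (p - 1) / 2 := by
    have := hp.two_le
    obtain ⟨k, hk⟩ := hodd
    omega
  obtain ⟨σ, ε, hM⟩ := exists_mMatrix_eq_units_mul_maillet hodd
  have : Nonempty (Fin ((p - 1) / 2)) := ⟨⟨0, hℓ⟩⟩
  rw [abs_det_eq_of_eq_units_mul_submatrix σ ε
      (N := of fun r s => 2 * mailletMatrix p r s - p) hM,
    ← mul_scalar_sub_vecMulVec (mailletMatrix_mulVec hodd hℓ), det_mul,
    det_scalar_two_sub_vecMulVec_single, Fintype.card_fin, abs_mul, abs_neg, abs_pow, abs_two,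
    mul_comm]
end

section
/- Let ℓ ≥ 1 be an integer. There exists a polynomial H in ℓ+1 variables with real coefficients, homogeneous of degree ℓ, such that for all real numbers 1 ≤ R_1 ≤ R_2 ≤ ⋯ ≤ R_{ℓ+1}, the integral ∫_{W(R_1,…,R_{ℓ+1})} ∏_{i=1}^{ℓ} dx_i/x_i over the region W(R_1,…,R_{ℓ+1}) = {x ∈ ℝ^ℓ : R_1 ≤ x_1 < x_2 < ⋯ < x_ℓ ≤ R_{ℓ+1} and x_i > R_i for each i} equals (1/ℓ!)·H(log R_1, log R_2, …, log R_{ℓ+1}). -/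
/-!
Slicing `W(R_1, …, R_{n+1})` at its last coordinate `x_n = t ∈ (R_n, R_{n+1}]` leaves, up to a
null set, the region `W(R_1, …, R_{n-1}, t)`, so the integral `I_n` satisfies
`I_n(R_1, …, R_{n+1}) = ∫_{R_n}^{R_{n+1}} I_{n-1}(R_1, …, R_{n-1}, t) dt/t`.
If `I_{n-1} = H_{n-1}(log R)/(n-1)!` with `H_{n-1}` homogeneous of degree `n-1`, the substitution
`s = log t` turns this into the difference of an antiderivative of `H_{n-1}` in its last variable
evaluated at `log R_{n+1}` and at `log R_n`; that antiderivative is again a polynomial,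
homogeneous of degree `n`.
-/

open MeasureTheory

/-- The region `W(R_1, …, R_{ℓ+1}) = {x ∈ ℝ^ℓ : R_1 ≤ x_1 < ⋯ < x_ℓ ≤ R_{ℓ+1}, x_i > R_i}`
(0-indexed: `R i.castSucc < x i` for each `i`, `x` strictly increasing, all coordinates at
most `R (Fin.last ℓ)`). -/
def shapeRegion (ℓ : ℕ) (R : Fin (ℓ + 1) → ℝ) : Set (Fin ℓ → ℝ) :=
  {x | (∀ i j : Fin ℓ, i < j → x i < x j) ∧
    ∀ i : Fin ℓ, R i.castSucc < x i ∧ x i ≤ R (Fin.last ℓ)}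

open Set MvPolynomial

theorem integral_eq_integral_integral_snoc {α E : Type*} [MeasureSpace α]
    [SigmaFinite (volume : Measure α)] [NormedAddCommGroup E] [NormedSpace ℝ E] {n : ℕ}
    {f : (Fin (n + 1) → α) → E} (hf : Integrable f) : ∫ x, f x = ∫ t, ∫ y, f (Fin.snoc y t) := by
  have he := (volume_preserving_piFinSuccAbove (fun _ : Fin (n + 1) => α) (Fin.last n)).symm
  have hsnoc : ∀ z : α × (Fin n → α),
      (MeasurableEquiv.piFinSuccAbove (fun _ => α) (Fin.last n)).symm z = Fin.snoc z.2 z.1 :=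
    fun z => Fin.insertNth_last' _ _
  rw [← he.integral_comp' f, Measure.volume_eq_prod, integral_prod]
  · simp only [hsnoc]
  · rw [← Measure.volume_eq_prod]
    exact (he.integrable_comp_emb (MeasurableEquiv.measurableEmbedding _)).2 hf

theorem Fin.monotone_snoc {α : Type*} [Preorder α] {n : ℕ} {q : Fin n → α} {t : α}
    (hq : Monotone q) (ht : ∀ i, q i ≤ t) : Monotone (Fin.snoc q t : Fin (n + 1) → α) := by
  intro i j hij
  induction j using Fin.lastCases with
  | last => induction i using Fin.lastCases with
    | last => rfl
    | cast i => simpa using ht i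
  | cast j => induction i using Fin.lastCases with
    | last => exact absurd hij (Fin.castSucc_lt_last j).not_ge
    | cast i => simpa using hq (Fin.castSucc_le_castSucc_iff.1 hij)

theorem Fin.monotone_snoc_init_init {α : Type*} [Preorder α] {n : ℕ} {R : Fin (n + 2) → α}
    (hR : Monotone R) {t : α} (ht : R (Fin.last n).castSucc ≤ t) :
    Monotone (Fin.snoc (Fin.init (Fin.init R)) t : Fin (n + 1) → α) :=
  Fin.monotone_snoc (hR.comp (Fin.strictMono_castSucc.comp Fin.strictMono_castSucc).monotone)
    fun _ => (hR (Fin.castSucc_le_castSucc_iff.2 (Fin.le_last _))).trans ht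

theorem Fin.init_le_snoc_init_init {α : Type*} [Preorder α] {n : ℕ} {R : Fin (n + 2) → α}
    {t : α} (ht : R (Fin.last n).castSucc ≤ t) :
    Fin.init R ≤ Fin.snoc (Fin.init (Fin.init R)) t := by
  intro i
  induction i using Fin.lastCases <;> simp [Fin.init, ht]

section ShapeRegion

variable {n : ℕ}

theorem measurableSet_shapeRegion (R : Fin (n + 1) → ℝ) : MeasurableSet (shapeRegion n R) := by
  have : shapeRegion n R =
      (⋂ i, ⋂ j, ⋂ (_ : i < j), {x | x i < x j}) ∩
        ⋂ i, ({x | R i.castSucc < x i} ∩ {x | x i ≤ R (Fin.last n)}) := by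
    ext x
    simp only [shapeRegion, mem_ofPred_eq, mem_inter_iff, mem_iInter]
  rw [this]
  refine .inter (.iInter fun i => .iInter fun j => .iInter fun _ => ?_) (.iInter fun i => ?_)
  · exact measurableSet_lt (measurable_pi_apply i) (measurable_pi_apply j)
  · exact (measurableSet_lt measurable_const (measurable_pi_apply i)).inter
      (measurableSet_le (measurable_pi_apply i) measurable_const)

theorem shapeRegion_subset_pi_Icc {R : Fin (n + 1) → ℝ} (hR : Monotone R) :
    shapeRegion n R ⊆ univ.pi fun _ => Icc (R 0) (R (Fin.last n)) :=
  fun _ hx i _ => ⟨(hR (Fin.zero_le _)).trans (hx.2 i).1.le, (hx.2 i).2⟩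

theorem integrableOn_shapeRegion {R : Fin (n + 1) → ℝ} (h0 : 0 < R 0) (hR : Monotone R) :
    IntegrableOn (fun x => ∏ i, (x i)⁻¹) (shapeRegion n R) := by
  refine IntegrableOn.mono_set ?_ (shapeRegion_subset_pi_Icc hR)
  refine ContinuousOn.integrableOn_compact (isCompact_univ_pi fun _ => isCompact_Icc) ?_
  exact continuousOn_finsetProd _ fun i _ =>
    (continuous_apply i).continuousOn.inv₀ fun x hx => (h0.trans_le (hx i trivial).1).ne'

theorem shapeRegion_inter_ae_eq (R : Fin (n + 1) → ℝ) :
    (shapeRegion n R ∩ {y | ∀ i, y i < R (Fin.last n)} : Set (Fin n → ℝ)) =ᵐ[volume]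
      shapeRegion n R := by
  refine ae_eq_set.2 ⟨by rw [sdiff_eq_empty.2 inter_subset_left, measure_empty],
    measure_mono_null (t := ⋃ i, {y | y i = R (Fin.last n)}) ?_ ?_⟩
  · rintro y ⟨hy, hlt⟩
    simp only [mem_inter_iff, hy, true_and, mem_ofPred_eq, not_forall, not_lt] at hlt
    obtain ⟨i, hi⟩ := hlt
    exact mem_iUnion.2 ⟨i, le_antisymm (hy.2 i).2 hi⟩
  · exact measure_iUnion_null fun i => Measure.pi_hyperplane _ i _

theorem snoc_mem_shapeRegion_iff {R : Fin (n + 2) → ℝ} {y : Fin n → ℝ} {t : ℝ} :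
    Fin.snoc y t ∈ shapeRegion (n + 1) R ↔
      t ∈ Ioc (R (Fin.last n).castSucc) (R (Fin.last (n + 1))) ∧
        y ∈ shapeRegion n (Fin.snoc (Fin.init (Fin.init R)) t) ∧ ∀ i, y i < t := by
  simp only [shapeRegion, mem_ofPred_eq, Fin.forall_fin_succ', Fin.snoc_castSucc, Fin.snoc_last,
    Fin.castSucc_lt_castSucc_iff, Fin.castSucc_lt_last, lt_self_iff_false, Fin.init, mem_Ioc,
    (Fin.castSucc_lt_last _).not_gt, false_imp_iff, imp_self, and_true, implies_true, forall_and,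
    true_imp_iff]
  constructor
  · rintro ⟨⟨hmono, hlt⟩, ⟨hlo, hL⟩, -, hU⟩
    exact ⟨⟨hL, hU⟩, ⟨hmono, hlo, fun i => (hlt i).le⟩, hlt⟩
  · rintro ⟨⟨hL, hU⟩, ⟨hmono, hlo, -⟩, hlt⟩
    exact ⟨⟨hmono, hlt⟩, ⟨hlo, hL⟩, fun i => (hlt i).le.trans hU, hU⟩

theorem integral_shapeRegion_succ {R : Fin (n + 2) → ℝ} (h0 : 0 < R 0) (hR : Monotone R) :
    ∫ x in shapeRegion (n + 1) R, ∏ i, (x i)⁻¹ =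
      ∫ t in Ioc (R (Fin.last n).castSucc) (R (Fin.last (n + 1))),
        t⁻¹ * ∫ y in shapeRegion n (Fin.snoc (Fin.init (Fin.init R)) t), ∏ i, (y i)⁻¹ := by
  set S : ℝ → Set (Fin n → ℝ) := fun t => shapeRegion n (Fin.snoc (Fin.init (Fin.init R)) t)
  have hS : ∀ t, MeasurableSet (S t ∩ {y | ∀ i, y i < t}) := fun t =>
    (measurableSet_shapeRegion _).inter <| by
      simp only [ofPred_forall]
      exact .iInter fun i => measurableSet_lt (measurable_pi_apply i) measurable_const
  have hslice : ∀ t y,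
      (shapeRegion (n + 1) R).indicator (fun x => ∏ i, (x i)⁻¹) (Fin.snoc y t) =
        (Ioc (R (Fin.last n).castSucc) (R (Fin.last (n + 1)))).indicator Inv.inv t *
          (S t ∩ {y | ∀ i, y i < t}).indicator (fun y => ∏ i, (y i)⁻¹) y := by
    intro t y
    by_cases h : Fin.snoc y t ∈ shapeRegion (n + 1) R
    · obtain ⟨ht, hy⟩ := snoc_mem_shapeRegion_iff.1 h
      rw [indicator_of_mem h, indicator_of_mem ht, indicator_of_mem (s := S t ∩ _) hy,
        Fin.prod_univ_castSucc]
      simp [mul_comm]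
    · rw [indicator_of_notMem h]
      by_cases ht : t ∈ Ioc (R (Fin.last n).castSucc) (R (Fin.last (n + 1)))
      · have hy : y ∉ S t ∩ {y | ∀ i, y i < t} := fun hy =>
          h (snoc_mem_shapeRegion_iff.2 ⟨ht, hy⟩)
        rw [indicator_of_notMem hy, mul_zero]
      · rw [indicator_of_notMem ht, zero_mul]
  have hae : ∀ t, (S t ∩ {y | ∀ i, y i < t} : Set (Fin n → ℝ)) =ᵐ[volume] S t := fun t => by
    simpa only [Fin.snoc_last] using shapeRegion_inter_ae_eq (Fin.snoc (Fin.init (Fin.init R)) t)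
  rw [← integral_indicator (measurableSet_shapeRegion _), integral_eq_integral_integral_snoc
    ((integrableOn_shapeRegion h0 hR).integrable_indicator (measurableSet_shapeRegion _)),
    ← integral_indicator measurableSet_Ioc]
  simp_rw [hslice, integral_const_mul, integral_indicator (hS _), setIntegral_congr_set (hae _),
    indicator_mul_left]
  rfl

end ShapeRegion

section IntegrateLast

variable {n : ℕ}

noncomputable def integrateLast (p : MvPolynomial (Fin (n + 1)) ℝ) :
    MvPolynomial (Fin (n + 1)) ℝ :=
  ∑ d ∈ p.support,
    monomial (d + Finsupp.single (Fin.last n) 1) ((d (Fin.last n) + 1 : ℝ)⁻¹ * coeff d p)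

theorem isHomogeneous_integrateLast {p : MvPolynomial (Fin (n + 1)) ℝ} {k : ℕ}
    (hp : p.IsHomogeneous k) : (integrateLast p).IsHomogeneous (k + 1) := by
  refine IsHomogeneous.sum _ _ _ fun d hd => isHomogeneous_monomial _ ?_
  rw [map_add, Finsupp.degree_single, Finsupp.degree_eq_weight_one]
  exact congrArg (· + 1) (hp (mem_support_iff.1 hd))

theorem eval_snoc_monomial {S : Type*} [CommSemiring S] (a : Fin n → S) (u : S)
    (d : Fin (n + 1) →₀ ℕ) (c : S) :
    eval (Fin.snoc a u) (monomial d c) = c * (∏ i, a i ^ d i.castSucc) * u ^ d (Fin.last n) := by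
  rw [eval_monomial, Finsupp.prod_pow, Fin.prod_univ_castSucc]
  simp [mul_assoc]

theorem hasDerivAt_eval_snoc_integrateLast (p : MvPolynomial (Fin (n + 1)) ℝ) (a : Fin n → ℝ)
    (s : ℝ) :
    HasDerivAt (fun u => eval (Fin.snoc a u) (integrateLast p)) (eval (Fin.snoc a s) p) s := by
  conv => enter [2]; rw [p.as_sum]
  simp only [integrateLast, map_sum, monomial_add_single, map_mul, map_pow, eval_X,
    Fin.snoc_last, eval_snoc_monomial]
  refine HasDerivAt.fun_sum fun d _ => ?_
  set k := d (Fin.last n)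
  have hpow : HasDerivAt (fun u : ℝ => u ^ (k + 1)) ((k + 1 : ℕ) * s ^ k) s :=
    hasDerivAt_pow _ _
  refine (((hpow.const_mul (coeff d p * ∏ i, a i ^ d i.castSucc)).div_const
    (k + 1 : ℝ)).congr_deriv ?_).congr_of_eventuallyEq (.of_forall fun u => ?_)
  · push_cast; field_simp
  · ring

theorem integral_inv_mul_eval_snoc_log (p : MvPolynomial (Fin (n + 1)) ℝ) (a : Fin n → ℝ)
    {L U : ℝ} (hL : 0 < L) (hLU : L ≤ U) :
    ∫ t in Ioc L U, t⁻¹ * eval (Fin.snoc a (Real.log t)) p =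
      eval (Fin.snoc a (Real.log U)) (integrateLast p) -
        eval (Fin.snoc a (Real.log L)) (integrateLast p) := by
  have hpos : ∀ t ∈ uIcc L U, t ≠ 0 := fun t ht =>
    (hL.trans_le (uIcc_of_le hLU ▸ ht).1).ne'
  rw [← intervalIntegral.integral_of_le hLU]
  refine intervalIntegral.integral_eq_sub_of_hasDerivAt
    (f := fun t => eval (Fin.snoc a (Real.log t)) (integrateLast p)) (fun t ht => ?_)
    (ContinuousOn.intervalIntegrable ?_)
  · simpa only [mul_comm, Function.comp_def] using
      (hasDerivAt_eval_snoc_integrateLast p a _).comp t (Real.hasDerivAt_log (hpos t ht))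
  · exact (continuousOn_inv₀.mono hpos).mul ((p.continuous_eval.comp
      (continuous_const.finSnoc continuous_id)).comp_continuousOn (Real.continuousOn_log.mono hpos))

end IntegrateLast

/-- `(Fin.last n).castSucc.succAbove` skips the index `n`, so at `log R` the first term is the
antiderivative at `(log R_0, …, log R_{n-1}, log R_{n+1})` and the second at
`(log R_0, …, log R_n)`; the factor `n + 1` turns `1/n!` into `1/(n+1)!`. -/
noncomputable def shapePoly : (n : ℕ) → MvPolynomial (Fin (n + 1)) ℝ
  | 0 => 1
  | n + 1 => C (n + 1 : ℝ) *
      (rename (Fin.last n).castSucc.succAbove (integrateLast (shapePoly n)) -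
        rename Fin.castSucc (integrateLast (shapePoly n)))

theorem isHomogeneous_shapePoly (n : ℕ) : (shapePoly n).IsHomogeneous n := by
  induction n with
  | zero => exact isHomogeneous_one _ _
  | succ n ih =>
    have hΨ := isHomogeneous_integrateLast ih
    exact (hΨ.rename_isHomogeneous.sub hΨ.rename_isHomogeneous).C_mul _

theorem integral_shapeRegion_eq_eval_shapePoly {n : ℕ} {R : Fin (n + 1) → ℝ} (h1 : 1 ≤ R 0)
    (hR : Monotone R) :
    ∫ x in shapeRegion n R, ∏ i, (x i)⁻¹ =
      (n.factorial : ℝ)⁻¹ * eval (fun i => Real.log (R i)) (shapePoly n) := by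
  induction n with
  | zero => simp [shapeRegion, shapePoly, measureReal_def, volume_pi, Measure.pi_empty_univ]
  | succ n ih =>
    set q := Fin.init (Fin.init R)
    have hL : 1 ≤ R (Fin.last n).castSucc := h1.trans (hR (Fin.zero_le _))
    have hslice : ∀ t ∈ Ioc (R (Fin.last n).castSucc) (R (Fin.last (n + 1))),
        t⁻¹ * ∫ y in shapeRegion n (Fin.snoc q t), ∏ i, (y i)⁻¹ = (n.factorial : ℝ)⁻¹ *
          (t⁻¹ * eval (Fin.snoc (Real.log ∘ q) (Real.log t)) (shapePoly n)) :=
      fun t ht => by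
        rw [ih (h1.trans (Fin.init_le_snoc_init_init ht.1.le 0))
          (Fin.monotone_snoc_init_init hR ht.1.le), ← Fin.comp_snoc, mul_left_comm]
        rfl
    have hskip : (fun i => Real.log (R i)) ∘ (Fin.last n).castSucc.succAbove =
        Fin.snoc (Real.log ∘ q) (Real.log (R (Fin.last (n + 1)))) := by
      funext i; induction i using Fin.lastCases <;> simp [q, Fin.init]
    have hinit : (fun i => Real.log (R i)) ∘ Fin.castSucc =
        Fin.snoc (Real.log ∘ q) (Real.log (R (Fin.last n).castSucc)) := by
      funext i; induction i using Fin.lastCases <;> simp [q, Fin.init]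
    rw [integral_shapeRegion_succ (by linarith) hR, setIntegral_congr_fun measurableSet_Ioc hslice,
      integral_const_mul, integral_inv_mul_eval_snoc_log _ _ (by linarith) (hR (Fin.le_last _))]
    simp only [shapePoly, map_mul, eval_C, map_sub, eval_rename, hskip, hinit, Nat.factorial_succ]
    push_cast
    field_simp

theorem measure_shapeRegion_eq_homogeneous_poly_of_logs_general (ℓ : ℕ) :
    ∃ H : MvPolynomial (Fin (ℓ + 1)) ℝ, H.IsHomogeneous ℓ ∧
      ∀ R : Fin (ℓ + 1) → ℝ, 1 ≤ R 0 → Monotone R →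
        ∫ x in shapeRegion ℓ R, (∏ i, (x i)⁻¹) =
          ((ℓ.factorial : ℝ))⁻¹ * MvPolynomial.eval (fun i => Real.log (R i)) H :=
  ⟨shapePoly ℓ, isHomogeneous_shapePoly ℓ, fun _ => integral_shapeRegion_eq_eval_shapePoly⟩

/-- There is a homogeneous polynomial `H` of degree `ℓ` in `ℓ+1` variables such that for all
`1 ≤ R_1 ≤ ⋯ ≤ R_{ℓ+1}`, the integral `∫_{W(R)} ∏ dx_i/x_i` equals
`(1/ℓ!)·H(log R_1, …, log R_{ℓ+1})`. -/
theorem measure_shapeRegion_eq_homogeneous_poly_of_logs (ℓ : ℕ) (hℓ : 1 ≤ ℓ) :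
    ∃ H : MvPolynomial (Fin (ℓ + 1)) ℝ, H.IsHomogeneous ℓ ∧
      ∀ R : Fin (ℓ + 1) → ℝ, 1 ≤ R 0 → Monotone R →
        ∫ x in shapeRegion ℓ R, (∏ i, (x i)⁻¹) =
          ((ℓ.factorial : ℝ))⁻¹ * MvPolynomial.eval (fun i => Real.log (R i)) H :=
  measure_shapeRegion_eq_homogeneous_poly_of_logs_general ℓ
end
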